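/- arXiv:2412.17178 — 8 statements merged into one kernel-verified Lean document; each statement's English description precedes it below -/
import Mathlib

section
/- Let n ≥ 1 and u, v : {1,…,n} → ℝ. The factorizable matrix Q(u,v) is positive definite if and only if u_i v_i > 0 for all i ∈ {1,…,n} and u_i v_j (u_j v_i − u_i v_j) > 0 for all 1 ≤ i < j ≤ n. -/
/-!
The diagonal entries and the `2 × 2` principal minors of `Q(u,v)` are `u i * v i` and
`u i * v j * (u j * v i - u i * v j)`, so the conditions are necessary. Conversely they say that the
ratios `r i = u i / v i` are positive and strictly increasing, so `r m = ∑ k ≤ m, d k` with all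
`d k > 0`, and then `Q(u,v) = Lᵀ diag(d) L` where `L k j = [k ≤ j] v j` is upper triangular with
nonzero diagonal, hence invertible.
-/

open Matrix BigOperators

/-- The factorizable matrix `Q(u,v)` with entries `Q i j = u i * v j` for `i ≤ j`
and `Q i j = u j * v i` for `i > j`. -/
noncomputable def facQ (n : ℕ) (u v : Fin n → ℝ) : Matrix (Fin n) (Fin n) ℝ :=
  Matrix.of fun i j => if i ≤ j then u i * v j else u j * v i

open Finset

namespace Matrix

open scoped ComplexOrder in
lemma PosDef.mul_sub_mul_pos {ι 𝕜 : Type*} [RCLike 𝕜] {A : Matrix ι ι 𝕜} (hA : A.PosDef)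
    {i j : ι} (hij : i ≠ j) : 0 < A i i * A j j - A i j * A j i := by
  have hinj : Function.Injective ![i, j] := by
    intro a b
    fin_cases a <;> fin_cases b <;> simp [hij, hij.symm]
  classical
  have := (hA.submatrix hinj).det_pos
  rw [det_fin_two] at this
  simpa using this

variable {ι R : Type*} [LinearOrder ι]

/-- Multiplication by `suffixSumMatrix v` sends `x` to its weighted suffix sums
`k ↦ ∑ j ≥ k, v j * x j`. -/
def suffixSumMatrix [Zero R] (v : ι → R) : Matrix ι ι R :=
  of fun k j => if k ≤ j then v j else 0

lemma suffixSumMatrix_isUpperTriangular [Zero R] (v : ι → R) :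
    (suffixSumMatrix v).IsUpperTriangular := fun k j hjk => by
  simp [suffixSumMatrix, (show j < k from hjk).not_ge]

lemma det_suffixSumMatrix [Fintype ι] [CommRing R] (v : ι → R) :
    (suffixSumMatrix v).det = ∏ i, v i := by
  rw [det_of_isUpperTriangular (suffixSumMatrix_isUpperTriangular v)]
  simp [suffixSumMatrix]

lemma mulVec_suffixSumMatrix_injective [Fintype ι] {K : Type*} [Field K] {v : ι → K}
    (hv : ∀ i, v i ≠ 0) :
    Function.Injective (suffixSumMatrix v).mulVec := by
  classical
  rw [mulVec_injective_iff_isUnit, isUnit_iff_isUnit_det, det_suffixSumMatrix]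
  exact (Finset.prod_ne_zero_iff.mpr fun i _ => hv i).isUnit

lemma transpose_suffixSumMatrix_mul_diagonal_mul_apply [Fintype ι] [LocallyFiniteOrderBot ι]
    [DecidableEq ι] [CommRing R] (v d : ι → R) (i j : ι) :
    ((suffixSumMatrix v)ᵀ * diagonal d * suffixSumMatrix v) i j
      = v i * v j * ∑ k ∈ Iic (min i j), d k := by
  rw [mul_apply, ← filter_ge_eq_Iic, sum_filter, mul_sum]
  refine sum_congr rfl fun k _ => ?_
  by_cases hi : k ≤ i <;> by_cases hj : k ≤ j <;> simp [suffixSumMatrix, mul_diagonal, hi, hj]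
  ring

lemma posDef_transpose_suffixSumMatrix_mul_diagonal_mul [Fintype ι] [DecidableEq ι]
    {v d : ι → ℝ} (hv : ∀ i, v i ≠ 0) (hd : ∀ k, 0 < d k) :
    ((suffixSumMatrix v)ᵀ * diagonal d * suffixSumMatrix v).PosDef := by
  simpa [conjTranspose_eq_transpose_of_trivial] using
    (PosDef.diagonal hd).conjTranspose_mul_mul_same (mulVec_suffixSumMatrix_injective hv)

end Matrix

lemma Fin.sum_Iic_eq_sum_range {M : Type*} [AddCommMonoid M] {n : ℕ} (f : ℕ → M) (m : Fin n) :
    ∑ k ∈ Iic m, f k = ∑ k ∈ range (m + 1), f k := by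
  rw [Nat.range_succ_eq_Iic, ← Fin.map_valEmbedding_Iic, sum_map]
  rfl

lemma Fin.exists_pos_sum_Iic_eq {n : ℕ} {r : Fin n → ℝ} (hr : StrictMono r)
    (hpos : ∀ i, 0 < r i) :
    ∃ d : Fin n → ℝ, (∀ k, 0 < d k) ∧ ∀ m, ∑ k ∈ Iic m, d k = r m := by
  let prev : ℕ → ℝ := fun k => if h : k = 0 ∨ n < k then 0 else r ⟨k - 1, by omega⟩
  refine ⟨fun k => prev (k + 1) - prev k, fun k => ?_, fun m => ?_⟩
  · obtain ⟨_ | k, hk⟩ := k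
    · simpa [prev, hk.ne'] using hpos ⟨0, hk⟩
    · have : r ⟨k, by omega⟩ < r ⟨k + 1, hk⟩ := hr (Fin.mk_lt_mk.mpr k.lt_succ_self)
      simpa [prev, show ¬n ≤ k by omega, show ¬n ≤ k + 1 by omega] using this
  · rw [Fin.sum_Iic_eq_sum_range (fun k => prev (k + 1) - prev k), sum_range_sub]
    simp [prev]

lemma div_lt_div_of_mul_pos_of_mul_mul_sub_pos {a b c d : ℝ} (hab : 0 < a * b)
    (h : 0 < a * d * (c * b - a * d)) : a / b < c / d := by
  have hb : b ≠ 0 := by rintro rfl; simp at hab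
  have hd : d ≠ 0 := by rintro rfl; simp at h
  have key : a * b * d ^ 2 * (c / d - a / b) = a * d * (c * b - a * d) := by
    field_simp
  have : 0 < c / d - a / b := by
    rw [← key] at h
    exact pos_of_mul_pos_right h (by positivity)
  linarith

lemma facQ_eq_transpose_suffixSumMatrix_mul_diagonal_mul {n : ℕ} {u v d : Fin n → ℝ}
    (hd : ∀ m, v m * ∑ k ∈ Iic m, d k = u m) :
    facQ n u v = (suffixSumMatrix v)ᵀ * diagonal d * suffixSumMatrix v := by
  ext i j
  rw [transpose_suffixSumMatrix_mul_diagonal_mul_apply]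
  rcases le_or_gt i j with hij | hji
  · simp only [facQ, of_apply, hij, if_true, min_eq_left hij, ← hd i]
    ring
  · simp only [facQ, of_apply, hji.not_ge, if_false, min_eq_right hji.le, ← hd j]
    ring

theorem stmt_0_general (n : ℕ) (u v : Fin n → ℝ) :
    (facQ n u v).PosDef ↔
      ((∀ i : Fin n, 0 < u i * v i) ∧
        ∀ i j : Fin n, i < j → 0 < u i * v j * (u j * v i - u i * v j)) := by
  constructor
  · intro hQ
    refine ⟨fun i => by simpa [facQ] using hQ.diag_pos (i := i), fun i j hij => ?_⟩
    have := hQ.mul_sub_mul_pos hij.ne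
    simp only [facQ, of_apply, le_refl, if_true, hij.le, hij.not_ge, if_false] at this
    linarith
  · rintro ⟨hdiag, hminor⟩
    have hv i : v i ≠ 0 := right_ne_zero_of_mul (hdiag i).ne'
    obtain ⟨d, hd, hsum⟩ := Fin.exists_pos_sum_Iic_eq (r := fun i => u i / v i)
      (fun i j hij => div_lt_div_of_mul_pos_of_mul_mul_sub_pos (hdiag i) (hminor i j hij))
      fun i => div_pos_iff.mpr (mul_pos_iff.mp (hdiag i))
    rw [facQ_eq_transpose_suffixSumMatrix_mul_diagonal_mul (d := d) fun m => by
      rw [hsum, mul_div_cancel₀ _ (hv m)]]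
    exact posDef_transpose_suffixSumMatrix_mul_diagonal_mul hv hd

theorem stmt_0 (n : ℕ) (hn : 1 ≤ n) (u v : Fin n → ℝ) :
    (facQ n u v).PosDef ↔
      ((∀ i : Fin n, 0 < u i * v i) ∧
        ∀ i j : Fin n, i < j → 0 < u i * v j * (u j * v i - u i * v j)) :=
  stmt_0_general n u v
end

section
/- Let n ≥ 1 and u, v : {1,…,n} → ℝ satisfy u_i ≠ 0 for all i ∈ {1,…,n}, u_{i+1} v_i − u_i v_{i+1} ≠ 0 for all 1 ≤ i ≤ n−1, and u_n v_n ≠ 0. Then the factorizable matrix Q(u,v) is invertible and Q(u,v)⁻¹ = Σ_{i=1}^{n} δ_i γ_i γ_iᵀ. -/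
open Matrix BigOperators

/-- `δ_i = u_{i+1}/(u_i (u_{i+1} v_i − u_i v_{i+1}))` for `i ≤ n-1` and `δ_n = 1/(u_n v_n)`
(0-indexed: the last index uses the second formula). -/
noncomputable def facDelta (n : ℕ) (u v : Fin n → ℝ) (i : Fin n) : ℝ :=
  if h : (i : ℕ) + 1 < n then
    u ⟨(i : ℕ) + 1, h⟩ / (u i * (u ⟨(i : ℕ) + 1, h⟩ * v i - u i * v ⟨(i : ℕ) + 1, h⟩))
  else 1 / (u i * v i)

/-- `γ_i = e_i − θ_{i+1} e_{i+1}` with `θ_{i+1} = u_i / u_{i+1}` for `i ≤ n-1`, and `γ_n = e_n`. -/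
noncomputable def facGamma (n : ℕ) (u : Fin n → ℝ) (i : Fin n) : Fin n → ℝ := fun a =>
  if h : (i : ℕ) + 1 < n then
    (if a = i then 1 else 0) - (u i / u ⟨(i : ℕ) + 1, h⟩) * (if a = ⟨(i : ℕ) + 1, h⟩ then 1 else 0)
  else if a = i then 1 else 0

/-! The vectors `γ_i` are `Q`-conjugate. Indeed `Q γ_j = c_j u'` where `u'` is `u` truncated to
the indices `≤ j`, while `γ_i` is supported on `{i, i + 1}` and, for `i + 1 < n`, orthogonal to `u`;
hence `γ_iᵀ Q γ_j = 0` for `i ≠ j` and `γ_iᵀ Q γ_i = u_i c_i = 1 / δ_i`. With `Γ` the unit upper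
triangular matrix whose rows are the `γ_i`, this says `Γ Q Γᵀ = diag(δ)⁻¹`, so
`Q⁻¹ = Γᵀ diag(δ) Γ = ∑ δ_i γ_i γ_iᵀ`. -/

theorem Matrix.sum_smul_vecMulVec_eq_transpose_mul_diagonal_mul {m ι α : Type*} [Fintype ι]
    [DecidableEq ι] [CommSemiring α] (d : ι → α) (G : Matrix ι m α) :
    ∑ i, d i • vecMulVec (G i) (G i) = Gᵀ * diagonal d * G := by
  ext a b
  simp only [sum_apply, smul_apply, vecMulVec_apply, smul_eq_mul, mul_apply, transpose_apply,
    diagonal_apply, mul_ite, mul_zero, Finset.sum_ite_eq', Finset.mem_univ, if_true]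
  exact Finset.sum_congr rfl fun i _ => by ring

section Factorizable

variable {n : ℕ} (u v : Fin n → ℝ)

theorem facGamma_of_lt {i : Fin n} (h : (i : ℕ) + 1 < n) :
    facGamma n u i = Pi.single i 1 - (u i / u ⟨i + 1, h⟩) • Pi.single ⟨i + 1, h⟩ 1 := by
  ext a
  simp [facGamma, h, Pi.single_apply]

theorem facGamma_of_not_lt {i : Fin n} (h : ¬(i : ℕ) + 1 < n) :
    facGamma n u i = Pi.single i 1 := by
  ext a
  simp [facGamma, h, Pi.single_apply]

theorem isUpperTriangular_facGamma : (Matrix.of (facGamma n u)).IsUpperTriangular := by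
  intro i a (hai : a < i)
  by_cases h : (i : ℕ) + 1 < n
  · simp only [facGamma_of_lt u h, of_apply, Pi.sub_apply, Pi.smul_apply, smul_eq_mul,
      Pi.single_apply, hai.ne, if_false, Fin.ext_iff]
    rw [if_neg (by omega), mul_zero, sub_zero]
  · simp [facGamma_of_not_lt u h, hai.ne]

theorem det_facGamma : (Matrix.of (facGamma n u)).det = 1 := by
  rw [det_of_isUpperTriangular (isUpperTriangular_facGamma u)]
  refine Finset.prod_eq_one fun i _ => ?_
  by_cases h : (i : ℕ) + 1 < n
  · simp [facGamma_of_lt u h, Fin.ext_iff]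
  · simp [facGamma_of_not_lt u h]

noncomputable def facQGammaScale (i : Fin n) : ℝ :=
  if h : (i : ℕ) + 1 < n then
    (u ⟨i + 1, h⟩ * v i - u i * v ⟨i + 1, h⟩) / u ⟨i + 1, h⟩
  else v i

theorem facQ_mulVec_facGamma (hu : ∀ i, u i ≠ 0) (i a : Fin n) :
    (facQ n u v *ᵥ facGamma n u i) a = if a ≤ i then u a * facQGammaScale u v i else 0 := by
  by_cases h : (i : ℕ) + 1 < n
  · have hi := hu ⟨i + 1, h⟩
    simp only [facGamma_of_lt u h, mulVec_sub, mulVec_smul, mulVec_single_one, facQGammaScale,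
      dif_pos h, facQ, Pi.sub_apply, Pi.smul_apply, col_apply, of_apply, smul_eq_mul]
    split_ifs with hai hai' hai'
    · field_simp
    · exact absurd (hai.trans (Fin.le_def.2 (Nat.le_succ _))) hai'
    · obtain rfl : a = ⟨i + 1, h⟩ :=
        Fin.ext (by simp only [Fin.le_def, not_le] at hai hai' ⊢; omega)
      field_simp
      ring
    · field_simp
      ring
  · have hai : a ≤ i := by rw [Fin.le_def]; omega
    simp [facGamma_of_not_lt u h, facQ, facQGammaScale, h, hai]

theorem facGamma_dotProduct_facQ_mulVec_facGamma (hu : ∀ i, u i ≠ 0) (i j : Fin n) :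
    facGamma n u i ⬝ᵥ (facQ n u v *ᵥ facGamma n u j) =
      if i = j then u i * facQGammaScale u v i else 0 := by
  by_cases h : (i : ℕ) + 1 < n
  · have hi := hu ⟨i + 1, h⟩
    rw [facGamma_of_lt u h, sub_dotProduct, smul_dotProduct, single_one_dotProduct,
      single_one_dotProduct, facQ_mulVec_facGamma u v hu, facQ_mulVec_facGamma u v hu]
    rcases lt_trichotomy i j with hij | rfl | hij
    · have hij' : (⟨i + 1, h⟩ : Fin n) ≤ j := Fin.le_def.2 hij
      rw [if_pos hij.le, if_pos hij', if_neg hij.ne, smul_eq_mul]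
      field_simp
      ring
    · have hii : ¬(⟨i + 1, h⟩ : Fin n) ≤ i := by simp [Fin.le_def]
      simp [hii]
    · have hij' : ¬(⟨i + 1, h⟩ : Fin n) ≤ j := by simp only [Fin.le_def]; omega
      simp [not_le.2 hij, hij', hij.ne']
  · have hij : i ≤ j ↔ i = j := ⟨fun hij => le_antisymm hij (by rw [Fin.le_def]; omega), le_of_eq⟩
    rw [facGamma_of_not_lt u h, single_one_dotProduct, facQ_mulVec_facGamma u v hu]
    simp only [hij]
    split_ifs with hij' <;> simp [hij']

theorem facGamma_mul_facQ_mul_transpose (hu : ∀ i, u i ≠ 0) :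
    Matrix.of (facGamma n u) * facQ n u v * (Matrix.of (facGamma n u))ᵀ =
      diagonal fun i => u i * facQGammaScale u v i := by
  ext i j
  rw [diagonal_apply, ← facGamma_dotProduct_facQ_mulVec_facGamma u v hu, Matrix.mul_assoc]
  rfl

theorem facDelta_eq_inv : facDelta n u v = fun i => (u i * facQGammaScale u v i)⁻¹ := by
  ext i
  by_cases h : (i : ℕ) + 1 < n
  · simp [facDelta, facQGammaScale, h, mul_div_assoc']
  · simp [facDelta, facQGammaScale, h]

theorem mul_facQGammaScale_ne_zero (hu : ∀ i, u i ≠ 0)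
    (h2 : ∀ (i : Fin n) (h : (i : ℕ) + 1 < n), u ⟨i + 1, h⟩ * v i - u i * v ⟨i + 1, h⟩ ≠ 0)
    (hlast : ∀ i : Fin n, ¬(i : ℕ) + 1 < n → u i * v i ≠ 0) (i : Fin n) :
    u i * facQGammaScale u v i ≠ 0 := by
  by_cases h : (i : ℕ) + 1 < n
  · rw [facQGammaScale, dif_pos h]
    exact mul_ne_zero (hu i) (div_ne_zero (h2 i h) (hu _))
  · rw [facQGammaScale, dif_neg h]
    exact hlast i h

end Factorizable

theorem stmt_1 (n : ℕ) (hn : 1 ≤ n) (u v : Fin n → ℝ)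
    (hu : ∀ i : Fin n, u i ≠ 0)
    (h2 : ∀ (i : Fin n) (h : (i : ℕ) + 1 < n),
      u ⟨(i : ℕ) + 1, h⟩ * v i - u i * v ⟨(i : ℕ) + 1, h⟩ ≠ 0)
    (h3 : u ⟨n - 1, by omega⟩ * v ⟨n - 1, by omega⟩ ≠ 0) :
    IsUnit (facQ n u v) ∧
      (facQ n u v)⁻¹ =
        ∑ i : Fin n, facDelta n u v i •
          Matrix.of (fun a b => facGamma n u i a * facGamma n u i b) := by
  set G := Matrix.of (facGamma n u)
  have hlast : ∀ i : Fin n, ¬(i : ℕ) + 1 < n → u i * v i ≠ 0 := fun i hi => by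
    rwa [show i = ⟨n - 1, by omega⟩ from Fin.ext (by simp; omega)]
  have hGQG : G * facQ n u v * Gᵀ * diagonal (facDelta n u v) = 1 := by
    rw [facGamma_mul_facQ_mul_transpose u v hu, diagonal_mul_diagonal, facDelta_eq_inv,
      ← diagonal_one]
    exact congrArg diagonal <| funext fun i =>
      mul_inv_cancel₀ (mul_facQGammaScale_ne_zero u v hu h2 hlast i)
  have hG : IsUnit G := (isUnit_iff_isUnit_det G).2 (by rw [det_facGamma]; exact isUnit_one)
  have hinv : facQ n u v * (Gᵀ * diagonal (facDelta n u v) * G) = 1 :=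
    hG.mul_left_cancel <| calc
      _ = G * facQ n u v * Gᵀ * diagonal (facDelta n u v) * G := by simp only [Matrix.mul_assoc]
      _ = G * 1 := by rw [hGQG, one_mul, mul_one]
  exact ⟨(isUnit_iff_isUnit_det _).2 (isUnit_det_of_right_inverse hinv),
    (inv_eq_right_inv hinv).trans (sum_smul_vecMulVec_eq_transpose_mul_diagonal_mul _ G).symm⟩
end

section
/- Let n ≥ 1 and let u, v : {1,…,n} → ℝ satisfy Assumption 1. Let S = {t_1 < t_2 < … < t_k} be a nonempty subset of {1,…,n}. Then the principal submatrix Q_S of the factorizable matrix Q(u,v) is invertible and hat(Q_S⁻¹) = Σ_{ℓ=1}^{k−1} Λ_{t_ℓ→t_{ℓ+1}} + Λ_{t_k→n+1}. -/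
open Matrix BigOperators

/-- Assumption 1. -/
def Assumption1 (n : ℕ) (u v : Fin n → ℝ) : Prop :=
  (∀ i : Fin n, 0 < u i * v i) ∧
    ∀ i j : Fin n, i < j → 0 < u i * v j * (u j * v i - u i * v j)

/-- The principal submatrix of `Q` indexed by `S`. -/
noncomputable def subMat (n : ℕ) (Q : Matrix (Fin n) (Fin n) ℝ) (S : Finset (Fin n)) :
    Matrix {x : Fin n // x ∈ S} {x : Fin n // x ∈ S} ℝ :=
  Q.submatrix (fun p => (p : Fin n)) (fun p => (p : Fin n))

/-- The `n×n` matrix agreeing with `(Q_S)⁻¹` on `S×S` and `0` elsewhere. -/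
noncomputable def hatInv (n : ℕ) (Q : Matrix (Fin n) (Fin n) ℝ) (S : Finset (Fin n)) :
    Matrix (Fin n) (Fin n) ℝ :=
  Matrix.of fun a b =>
    if ha : a ∈ S then
      if hb : b ∈ S then (subMat n Q S)⁻¹ ⟨a, ha⟩ ⟨b, hb⟩ else 0
    else 0

/-- `Λ_{i→j} = (u_j/(u_i (u_j v_i − u_i v_j))) (e_i − (u_i/u_j) e_j)(e_i − (u_i/u_j) e_j)ᵀ`. -/
noncomputable def LamMid (n : ℕ) (u v : Fin n → ℝ) (i j : Fin n) :
    Matrix (Fin n) (Fin n) ℝ :=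
  (u j / (u i * (u j * v i - u i * v j))) •
    Matrix.of (fun a b =>
      ((if a = i then 1 else 0) - u i / u j * (if a = j then 1 else 0)) *
      ((if b = i then 1 else 0) - u i / u j * (if b = j then 1 else 0)))

/-- `Λ_{i→n+1} = (1/(u_i v_i)) e_i e_iᵀ`. -/
noncomputable def LamEnd (n : ℕ) (u v : Fin n → ℝ) (i : Fin n) :
    Matrix (Fin n) (Fin n) ℝ :=
  (1 / (u i * v i)) •
    Matrix.of (fun a b => (if a = i then (1 : ℝ) else 0) * (if b = i then 1 else 0))

/-!
After reindexing along `t` we may assume `S = Fin (m + 1)`, with `a = u ∘ t`, `b = v ∘ t`.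
Each `Λ_{ℓ→ℓ+1}` is a multiple of `w wᵀ` with `w = e_ℓ - (a_ℓ / a_{ℓ+1}) e_{ℓ+1}`, and the
column `Q w` is proportional to `a_p` for `p ≤ ℓ` and vanishes for `p ≥ ℓ + 1`. Hence
`Q Λ_{ℓ→ℓ+1} = r_ℓ e_ℓᵀ - r'_{ℓ+1} e_{ℓ+1}ᵀ` and `Q Λ_{m→end} = r_m e_mᵀ`, where
`r_i = (a_p / a_i)_{p ≤ i}` and `r'_i = (a_p / a_i)_{p < i}`. Since `r'_0 = 0` the sum telescopes
to `∑ (r_i - r'_i) e_iᵀ = ∑ e_i e_iᵀ = 1`.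
-/

open Function

section FactorizableInverse

variable {n : ℕ} (a b : Fin n → ℝ)

lemma facQ_of_le {i j : Fin n} (h : i ≤ j) : facQ n a b i j = a i * b j := if_pos h

lemma facQ_of_ge {i j : Fin n} (h : j ≤ i) : facQ n a b i j = a j * b i := by
  rcases h.eq_or_lt with rfl | h
  · exact if_pos le_rfl
  · exact if_neg h.not_ge

lemma LamMid_eq_smul_vecMulVec (i j : Fin n) :
    LamMid n a b i j = (a j / (a i * (a j * b i - a i * b j))) •
      vecMulVec (Pi.single i 1 - (a i / a j) • Pi.single j 1)
        (Pi.single i 1 - (a i / a j) • Pi.single j 1) := by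
  ext p q
  simp [LamMid, vecMulVec_apply, Pi.single_apply]

lemma LamEnd_eq_smul_vecMulVec (i : Fin n) :
    LamEnd n a b i = (1 / (a i * b i)) • vecMulVec (Pi.single i 1) (Pi.single i 1) := by
  ext p q
  simp [LamEnd, vecMulVec_apply, Pi.single_apply]

noncomputable def ratioUpTo (i : Fin n) : Fin n → ℝ := fun p => if p ≤ i then a p / a i else 0

noncomputable def ratioBelow (i : Fin n) : Fin n → ℝ := fun p => if p < i then a p / a i else 0

lemma ratioUpTo_sub_ratioBelow {i : Fin n} (hi : a i ≠ 0) :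
    ratioUpTo a i - ratioBelow a i = Pi.single i 1 := by
  ext p
  rcases lt_trichotomy p i with h | rfl | h
  · simp [ratioUpTo, ratioBelow, h, h.le, h.ne]
  · simp [ratioUpTo, ratioBelow, hi]
  · simp [ratioUpTo, ratioBelow, h.not_ge, h.not_gt, h.ne']

lemma facQ_mul_LamMid {i j : Fin n} (hij : i < j) (hgap : ∀ p, p ≤ i ∨ j ≤ p)
    (hi : a i ≠ 0) (hj : a j ≠ 0) (hd : a j * b i - a i * b j ≠ 0) :
    facQ n a b * LamMid n a b i j =
      vecMulVec (ratioUpTo a i) (Pi.single i 1) - vecMulVec (ratioBelow a j) (Pi.single j 1) := by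
  rw [LamMid_eq_smul_vecMulVec, Matrix.mul_smul, mul_vecMulVec]
  ext p q
  simp only [mulVec_sub, mulVec_smul, mulVec_single_one, Matrix.smul_apply, Matrix.sub_apply,
    vecMulVec_apply, Pi.sub_apply, Pi.smul_apply, col_apply, smul_eq_mul, ratioUpTo, ratioBelow]
  rcases hgap p with hp | hp
  · rw [facQ_of_le a b hp, facQ_of_le a b (hp.trans hij.le), if_pos hp, if_pos (hp.trans_lt hij)]
    field_simp
  · rw [facQ_of_ge a b (hij.le.trans hp), facQ_of_ge a b hp, if_neg (hij.trans_le hp).not_ge,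
      if_neg hp.not_gt]
    field_simp
    ring

end FactorizableInverse

/-- The claimed inverse for `k = m + 1`, with `ℓ ↦ ℓ + 1` written as `castSucc ↦ succ`. -/
noncomputable def chainInv (n m : ℕ) (u v : Fin n → ℝ) (t : Fin (m + 1) → Fin n) :
    Matrix (Fin n) (Fin n) ℝ :=
  ∑ ℓ : Fin m, LamMid n u v (t ℓ.castSucc) (t ℓ.succ) + LamEnd n u v (t (Fin.last m))

section Chain

variable {m : ℕ} (a b : Fin (m + 1) → ℝ)

lemma facQ_mul_LamEnd_last (ha : a (Fin.last m) ≠ 0) (hb : b (Fin.last m) ≠ 0) :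
    facQ (m + 1) a b * LamEnd (m + 1) a b (Fin.last m) =
      vecMulVec (ratioUpTo a (Fin.last m)) (Pi.single (Fin.last m) 1) := by
  rw [LamEnd_eq_smul_vecMulVec, Matrix.mul_smul, mul_vecMulVec, ← vecMulVec_smul]
  ext p q
  simp only [mulVec_single_one, vecMulVec_apply, Pi.smul_apply, col_apply, smul_eq_mul, ratioUpTo,
    if_pos (Fin.le_last p), facQ_of_le a b (Fin.le_last p)]
  field_simp

theorem facQ_mul_chainInv (ha : ∀ i, a i ≠ 0) (hb : b (Fin.last m) ≠ 0)
    (hd : ∀ ℓ : Fin m, a ℓ.succ * b ℓ.castSucc - a ℓ.castSucc * b ℓ.succ ≠ 0) :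
    facQ (m + 1) a b * chainInv (m + 1) m a b id = 1 := by
  set C := fun i => vecMulVec (ratioUpTo a i) (Pi.single i (1 : ℝ))
  set D := fun i => vecMulVec (ratioBelow a i) (Pi.single i (1 : ℝ))
  have hD0 : D 0 = 0 := by
    simp only [D, show ratioBelow a 0 = 0 from funext fun p => if_neg p.not_lt_zero,
      zero_vecMulVec]
  calc facQ (m + 1) a b * chainInv (m + 1) m a b id
      = ∑ ℓ : Fin m, (C ℓ.castSucc - D ℓ.succ) + C (Fin.last m) := by
        simp only [chainInv, Matrix.mul_add, Matrix.mul_sum, id]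
        rw [facQ_mul_LamEnd_last a b (ha _) hb]
        congr 1
        refine Finset.sum_congr rfl fun ℓ _ =>
          facQ_mul_LamMid a b ℓ.castSucc_lt_succ (fun p => ?_) (ha _) (ha _) (hd ℓ)
        exact (le_or_gt p ℓ.castSucc).imp_right Fin.castSucc_lt_iff_succ_le.mp
    _ = ∑ i, (C i - D i) := by
        rw [Finset.sum_sub_distrib, Finset.sum_sub_distrib, Fin.sum_univ_castSucc C,
          Fin.sum_univ_succ D, hD0]
        abel
    _ = ∑ i, single i i 1 := by
        refine Finset.sum_congr rfl fun i _ => ?_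
        rw [← sub_vecMulVec, ratioUpTo_sub_ratioBelow a (ha i), single_eq_single_vecMulVec_single]
    _ = 1 := sum_single_one

end Chain

section Reindexing

variable {n k : ℕ} {u v : Fin n → ℝ} {t : Fin k → Fin n}

lemma Assumption1.comp (hA : Assumption1 n u v) (ht : StrictMono t) :
    Assumption1 k (u ∘ t) (v ∘ t) :=
  ⟨fun i => hA.1 (t i), fun _ _ hij => hA.2 _ _ (ht hij)⟩

lemma facQ_submatrix (ht : StrictMono t) :
    (facQ n u v).submatrix t t = facQ k (u ∘ t) (v ∘ t) := by
  ext i j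
  simp [facQ, ht.le_iff_le]

lemma chainInv_submatrix {m : ℕ} {t : Fin (m + 1) → Fin n} (ht : Injective t) :
    (chainInv n m u v t).submatrix t t = chainInv (m + 1) m (u ∘ t) (v ∘ t) id := by
  ext i j
  simp [chainInv, Matrix.sum_apply, LamMid, LamEnd, ht.eq_iff]

lemma chainInv_apply_of_notMem_range {m : ℕ} {t : Fin (m + 1) → Fin n} {x : Fin n}
    (hx : x ∉ Set.range t) (y : Fin n) :
    chainInv n m u v t x y = 0 ∧ chainInv n m u v t y x = 0 := by
  simp only [Set.mem_range, not_exists] at hx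
  constructor <;> simp [chainInv, Matrix.sum_apply, LamMid, LamEnd, Ne.symm (hx _)]

lemma chainInv_eq_sum_dite {m : ℕ} (t : Fin (m + 1) → Fin n) :
    chainInv n m u v t =
      (∑ ℓ : Fin (m + 1),
          if h : (ℓ : ℕ) + 1 < m + 1 then LamMid n u v (t ℓ) (t ⟨(ℓ : ℕ) + 1, h⟩) else 0) +
        LamEnd n u v (t ⟨m + 1 - 1, by omega⟩) := by
  rw [chainInv, Fin.sum_univ_castSucc, dif_neg (by simp), add_zero]
  congr 1
  exact Finset.sum_congr rfl fun ℓ _ => by rw [dif_pos (by simp)]; rfl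

end Reindexing

section PrincipalSubmatrix

variable {n : ℕ} {Q M : Matrix (Fin n) (Fin n) ℝ} {S : Finset (Fin n)}

lemma subMat_mul_subMat_eq_one {k : ℕ} {t : Fin k → Fin n} (ht : Injective t)
    (hS : S = Finset.image t Finset.univ) (h : Q.submatrix t t * M.submatrix t t = 1) :
    subMat n Q S * subMat n M S = 1 := by
  subst hS
  have hbij : Bijective fun ℓ =>
      (⟨t ℓ, Finset.mem_image_of_mem t (Finset.mem_univ ℓ)⟩ : Finset.image t Finset.univ) :=
    ⟨fun _ _ hts => ht (congrArg Subtype.val hts), fun ⟨x, hx⟩ => by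
      obtain ⟨ℓ, -, rfl⟩ := Finset.mem_image.mp hx
      exact ⟨ℓ, rfl⟩⟩
  set e := Equiv.ofBijective _ hbij
  have hval : t ∘ e.symm = Subtype.val :=
    funext fun x => congrArg Subtype.val (e.apply_symm_apply x)
  have hsub : ∀ A : Matrix (Fin n) (Fin n) ℝ,
      subMat n A (Finset.image t Finset.univ) = (A.submatrix t t).submatrix e.symm e.symm := by
    intro A
    rw [submatrix_submatrix, hval]
    rfl
  rw [hsub, hsub, submatrix_mul_equiv, h, submatrix_one_equiv]

lemma isUnit_subMat_and_hatInv_eq (hrow : ∀ x ∉ S, ∀ y, M x y = 0)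
    (hcol : ∀ y ∉ S, ∀ x, M x y = 0) (h : subMat n Q S * subMat n M S = 1) :
    IsUnit (subMat n Q S) ∧ hatInv n Q S = M := by
  refine ⟨(isUnit_iff_isUnit_det _).mpr (isUnit_det_of_right_inverse h), ?_⟩
  ext x y
  rw [hatInv, of_apply, inv_eq_right_inv h]
  by_cases hx : x ∈ S
  · by_cases hy : y ∈ S
    · simp [hx, hy, subMat]
    · simp [hx, hy, hcol y hy]
  · simp [hx, hrow x hx]

end PrincipalSubmatrix

theorem stmt_3 (n : ℕ) (u v : Fin n → ℝ) (hA : Assumption1 n u v)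
    (S : Finset (Fin n)) (k : ℕ) (hk : 0 < k) (t : Fin k → Fin n)
    (hmono : StrictMono t) (hrange : S = Finset.image t Finset.univ) :
    IsUnit (subMat n (facQ n u v) S) ∧
      hatInv n (facQ n u v) S =
        (∑ ℓ : Fin k,
            if h : (ℓ : ℕ) + 1 < k then LamMid n u v (t ℓ) (t ⟨(ℓ : ℕ) + 1, h⟩) else 0) +
          LamEnd n u v (t ⟨k - 1, by omega⟩) := by
  obtain ⟨m, rfl⟩ := Nat.exists_eq_add_one_of_ne_zero hk.ne'
  rw [← chainInv_eq_sum_dite]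
  have hS : ∀ x ∉ S, x ∉ Set.range t := by simp [hrange]
  refine isUnit_subMat_and_hatInv_eq
    (fun x hx y => (chainInv_apply_of_notMem_range (hS x hx) y).1)
    (fun y hy x => (chainInv_apply_of_notMem_range (hS y hy) x).2)
    (subMat_mul_subMat_eq_one hmono.injective hrange ?_)
  obtain ⟨hdiag, hdet⟩ := hA.comp hmono
  rw [facQ_submatrix hmono, chainInv_submatrix hmono.injective]
  exact facQ_mul_chainInv _ _ (fun i => left_ne_zero_of_mul (hdiag i).ne')
    (right_ne_zero_of_mul (hdiag _).ne')
    (fun ℓ => right_ne_zero_of_mul (hdet _ _ ℓ.castSucc_lt_succ).ne')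
end

section
/- Let n, d ≥ 1 and let T ∈ ℝ^{dn×dn} be a symmetric positive definite matrix, viewed as an n×n array of d×d blocks. Define X̄^B_T = {(x,z,τ) ∈ ℝ^{dn} × {0,1}^n × ℝ : τ ≥ xᵀ T x, and for each i ∈ {1,…,n}, z_i = 0 implies x_{[i]} = 0, where x_{[i]} ∈ ℝ^d is the i-th block of x}. Define P^B_T = conv({(𝟙_S, hat(T_{[S]}⁻¹)) : S ⊆ {1,…,n}}) ⊆ ℝ^n × ℝ^{dn×dn}, where 𝟙_S ∈ ℝ^n is the 0/1 indicator vector of S. Then the closure of the convex hull of X̄^B_T equals the set of (x,z,τ) ∈ ℝ^{dn} × ℝ^n × ℝ for which there exists W ∈ ℝ^{dn×dn} such that the (dn+1)×(dn+1) symmetric matrix [[W, x],[xᵀ, τ]] is positive semidefinite and (z, W) ∈ P^B_T. -/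
open Matrix BigOperators

/-- The block principal submatrix of `T` with block indices in `S`. -/
noncomputable def blockSubMat (n d : ℕ) (T : Matrix (Fin n × Fin d) (Fin n × Fin d) ℝ)
    (S : Finset (Fin n)) :
    Matrix {r : Fin n × Fin d // r.1 ∈ S} {r : Fin n × Fin d // r.1 ∈ S} ℝ :=
  T.submatrix (fun p => (p : Fin n × Fin d)) (fun p => (p : Fin n × Fin d))

/-- The `dn×dn` matrix agreeing with `(T_{[S]})⁻¹` on blocks indexed by `S×S`
and `0` elsewhere. -/
noncomputable def blockHatInv (n d : ℕ) (T : Matrix (Fin n × Fin d) (Fin n × Fin d) ℝ)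
    (S : Finset (Fin n)) : Matrix (Fin n × Fin d) (Fin n × Fin d) ℝ :=
  Matrix.of fun p q =>
    if hp : p.1 ∈ S then
      if hq : q.1 ∈ S then (blockSubMat n d T S)⁻¹ ⟨p, hp⟩ ⟨q, hq⟩ else 0
    else 0

/-- The bordered matrix `[[W, x], [xᵀ, τ]]`. -/
def borderMat {ι : Type*} (W : Matrix ι ι ℝ) (x : ι → ℝ) (τ : ℝ) :
    Matrix (ι ⊕ Unit) (ι ⊕ Unit) ℝ :=
  Matrix.of fun a b =>
    match a, b with
    | Sum.inl i, Sum.inl j => W i j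
    | Sum.inl i, Sum.inr _ => x i
    | Sum.inr _, Sum.inl j => x j
    | Sum.inr _, Sum.inr _ => τ

/-- The mixed-integer epigraph set `X̄^B_T`. -/
def XbarB (n d : ℕ) (T : Matrix (Fin n × Fin d) (Fin n × Fin d) ℝ) :
    Set ((Fin n × Fin d → ℝ) × (Fin n → ℝ) × ℝ) :=
  {p | (∀ i : Fin n, p.2.1 i = 0 ∨ p.2.1 i = 1) ∧
       p.1 ⬝ᵥ (T *ᵥ p.1) ≤ p.2.2 ∧
       ∀ i : Fin n, p.2.1 i = 0 → ∀ b : Fin d, p.1 (i, b) = 0}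

/-- `P^B_T`, the convex hull of the points `(𝟙_S, hat(T_{[S]}⁻¹))`. -/
noncomputable def PB (n d : ℕ) (T : Matrix (Fin n × Fin d) (Fin n × Fin d) ℝ) :
    Set ((Fin n → ℝ) × Matrix (Fin n × Fin d) (Fin n × Fin d) ℝ) :=
  convexHull ℝ
    {q | ∃ S : Finset (Fin n),
      q = ((fun i => if i ∈ S then (1 : ℝ) else 0), blockHatInv n d T S)}

/-!
A point of `X̄^B_T` with support `S = {i | z_i = 1}` lifts with `W = hat(T_{[S]}⁻¹)`: this `W`
satisfies `W T W = W` and `W T x = x` for `x` supported on the blocks of `S`, so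
`vᵀ W v + 2 t xᵀ v + t² τ = (W v + t x)ᵀ T (W v + t x) + t² (τ - xᵀ T x) ≥ 0`, i.e. the bordered
matrix is positive semidefinite. The set of lifted points `((x, z, τ), W)` is convex and closed,
and its projection is closed because `W` ranges over the compact set `P^B_T`.

Conversely, let `W = Σ λ_S hat(T_{[S]}⁻¹)` be invertible and put `u = W⁻¹ x`. The map
`(z, H) ↦ (H u, z, uᵀ H u + s)`, with slack `s = τ - uᵀ W u ≥ 0`, is affine, sends each vertex
`(𝟙_S, hat(T_{[S]}⁻¹))` into `X̄^B_T` and sends `(z, W)` to `(x, z, τ)`. A general point of the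
projection is the limit of the open segment joining it to `(x, 𝟙, xᵀ T x)`, which lifts with
`T⁻¹`; by convexity the points of that segment lift with a positive definite `W`.
-/

section BorderMat

variable {ι : Type*}

lemma isHermitian_borderMat_iff {W : Matrix ι ι ℝ} {x : ι → ℝ} {τ : ℝ} :
    (borderMat W x τ).IsHermitian ↔ W.IsHermitian := by
  simp only [IsHermitian.ext_iff, star_trivial]
  refine ⟨fun h i j => h (.inl i) (.inl j), fun h => ?_⟩
  rintro (i | _) (j | _)
  · exact h i j
  all_goals simp [borderMat]

lemma Matrix.PosSemidef.of_borderMat {W : Matrix ι ι ℝ} {x : ι → ℝ} {τ : ℝ}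
    (h : (borderMat W x τ).PosSemidef) : W.PosSemidef :=
  h.submatrix Sum.inl

lemma borderMat_add_smul (a b : ℝ) (W₁ W₂ : Matrix ι ι ℝ) (x₁ x₂ : ι → ℝ) (τ₁ τ₂ : ℝ) :
    borderMat (a • W₁ + b • W₂) (a • x₁ + b • x₂) (a * τ₁ + b * τ₂) =
      a • borderMat W₁ x₁ τ₁ + b • borderMat W₂ x₂ τ₂ := by
  ext a b
  rcases a with i | _ <;> rcases b with j | _ <;> simp [borderMat]

@[fun_prop]
lemma Continuous.borderMat {X : Type*} [TopologicalSpace X] {W : X → Matrix ι ι ℝ}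
    {x : X → ι → ℝ} {τ : X → ℝ} (hW : Continuous W) (hx : Continuous x) (hτ : Continuous τ) :
    Continuous fun y => borderMat (W y) (x y) (τ y) := by
  refine continuous_matrix fun a b => ?_
  rcases a with i | _ <;> rcases b with j | _ <;>
    simp only [_root_.borderMat, of_apply] <;> fun_prop

variable [Fintype ι]

lemma Matrix.IsHermitian.mulVec_dotProduct {M : Matrix ι ι ℝ} (hM : M.IsHermitian) (a b : ι → ℝ) :
    (M *ᵥ a) ⬝ᵥ b = a ⬝ᵥ (M *ᵥ b) := by
  rw [dotProduct_mulVec, ← mulVec_transpose, (isHermitian_iff_isSymm.1 hM).eq]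

lemma sumElim_dotProduct_borderMat_mulVec (W : Matrix ι ι ℝ) (x : ι → ℝ) (τ : ℝ) (v : ι → ℝ)
    (t : ℝ) :
    Sum.elim v (fun _ => t) ⬝ᵥ (borderMat W x τ *ᵥ Sum.elim v (fun _ => t)) =
      v ⬝ᵥ (W *ᵥ v) + 2 * t * (x ⬝ᵥ v) + t ^ 2 * τ := by
  have hcross : ∑ i, v i * (x i * t) = t * (x ⬝ᵥ v) := by
    rw [dotProduct, Finset.mul_sum]; exact Finset.sum_congr rfl fun i _ => by ring
  simp only [dotProduct, mulVec, Fintype.sum_sum_type, borderMat, of_apply, Sum.elim_inl,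
    Sum.elim_inr, Finset.univ_unique, Finset.sum_singleton, mul_add, Finset.sum_add_distrib]
    at hcross ⊢
  rw [hcross]
  ring

lemma posSemidef_borderMat_iff {W : Matrix ι ι ℝ} {x : ι → ℝ} {τ : ℝ} :
    (borderMat W x τ).PosSemidef ↔
      W.IsHermitian ∧ ∀ v t, 0 ≤ v ⬝ᵥ (W *ᵥ v) + 2 * t * (x ⬝ᵥ v) + t ^ 2 * τ := by
  rw [posSemidef_iff_dotProduct_mulVec, isHermitian_borderMat_iff]
  refine and_congr_right fun _ => ⟨fun h v t => ?_, fun h y => ?_⟩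
  · simpa [sumElim_dotProduct_borderMat_mulVec] using h (Sum.elim v fun _ => t)
  · have hy : y = Sum.elim (y ∘ Sum.inl) fun _ => y (Sum.inr ()) := by ext (i | _) <;> rfl
    rw [star_trivial, hy, sumElim_dotProduct_borderMat_mulVec]
    exact h _ _

lemma isClosed_setOf_posSemidef : IsClosed {M : Matrix ι ι ℝ | M.PosSemidef} := by
  simp only [posSemidef_iff_dotProduct_mulVec, Set.ofPred_and, Set.ofPred_forall]
  exact (isClosed_eq continuous_id.matrix_conjTranspose continuous_id).inter <|
    isClosed_iInter fun x => isClosed_le continuous_const <|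
      continuous_const.dotProduct (continuous_id.matrix_mulVec continuous_const)

lemma Matrix.IsHermitian.dotProduct_mulVec_mul_mul_self {T H : Matrix ι ι ℝ}
    (hH : H.IsHermitian) (hHTH : H * T * H = H) (v : ι → ℝ) :
    (H *ᵥ v) ⬝ᵥ (T *ᵥ (H *ᵥ v)) = v ⬝ᵥ (H *ᵥ v) := by
  rw [hH.mulVec_dotProduct, mulVec_mulVec, mulVec_mulVec, hHTH]

lemma posSemidef_borderMat_of_mul_mul_self {T H : Matrix ι ι ℝ} {x : ι → ℝ} {σ : ℝ}
    (hT : T.PosSemidef) (hH : H.IsHermitian) (hHTH : H * T * H = H)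
    (hx : H *ᵥ (T *ᵥ x) = x) (hσ : x ⬝ᵥ (T *ᵥ x) ≤ σ) :
    (borderMat H x σ).PosSemidef := by
  refine posSemidef_borderMat_iff.2 ⟨hH, fun v t => ?_⟩
  have hsq := hT.dotProduct_mulVec_nonneg (H *ᵥ v + t • x)
  have hHv := hH.dotProduct_mulVec_mul_mul_self hHTH v
  have hxv : (H *ᵥ v) ⬝ᵥ (T *ᵥ x) = x ⬝ᵥ v := by
    rw [hH.mulVec_dotProduct, hx, dotProduct_comm]
  have hvx : x ⬝ᵥ (T *ᵥ (H *ᵥ v)) = x ⬝ᵥ v := by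
    rw [← hT.isHermitian.mulVec_dotProduct, ← hH.mulVec_dotProduct, hx]
  simp only [star_trivial, mulVec_add, mulVec_smul, dotProduct_add, add_dotProduct,
    dotProduct_smul, smul_dotProduct, smul_eq_mul, hHv, hxv, hvx] at hsq
  nlinarith [mul_nonneg (sq_nonneg t) (sub_nonneg.2 hσ)]

end BorderMat

section Compression

variable {ι κ : Type*} [Fintype ι] [Fintype κ] [DecidableEq κ] {E : Matrix ι κ ℝ}
  {T : Matrix ι ι ℝ}

lemma mul_inv_mul_transpose_mul_mul_self (hA : IsUnit (Eᵀ * T * E).det) :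
    E * (Eᵀ * T * E)⁻¹ * Eᵀ * T * (E * (Eᵀ * T * E)⁻¹ * Eᵀ) = E * (Eᵀ * T * E)⁻¹ * Eᵀ := by
  calc _ = E * (Eᵀ * T * E)⁻¹ * (Eᵀ * T * E) * (Eᵀ * T * E)⁻¹ * Eᵀ := by
        simp only [Matrix.mul_assoc]
    _ = _ := by rw [nonsing_inv_mul_cancel_right _ _ hA]

lemma mul_inv_mul_transpose_mulVec_mulVec (hA : IsUnit (Eᵀ * T * E).det) (c : κ → ℝ) :
    (E * (Eᵀ * T * E)⁻¹ * Eᵀ) *ᵥ (T *ᵥ (E *ᵥ c)) = E *ᵥ c := by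
  calc _ = (E * (Eᵀ * T * E)⁻¹ * (Eᵀ * T * E)) *ᵥ c := by
        simp only [mulVec_mulVec, Matrix.mul_assoc]
    _ = _ := by rw [nonsing_inv_mul_cancel_right _ _ hA]

end Compression

section SubtypeEmbedding

variable {ι : Type*} [Fintype ι] [DecidableEq ι]

lemma Fintype.sum_subtype_ite_val_eq {α M : Type*} [AddCommMonoid M] [DecidableEq α]
    {p : α → Prop} [DecidablePred p] [Fintype (Subtype p)] (f : Subtype p → M) (a : α) :
    ∑ x : Subtype p, (if (x : α) = a then f x else 0) = if h : p a then f ⟨a, h⟩ else 0 := by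
  split_ifs with h
  · rw [Finset.sum_eq_single ⟨a, h⟩ (fun b _ hb => if_neg fun h' => hb (Subtype.ext h'))
      (by simp)]
    simp
  · exact Finset.sum_eq_zero fun x _ => if_neg fun hx : (x : α) = a => h (hx ▸ x.2)

lemma one_submatrix_mul_mul_one_submatrix {κ : Type*} [Fintype κ] (M : Matrix ι ι ℝ)
    (e : κ → ι) :
    (1 : Matrix ι ι ℝ).submatrix e id * M * (1 : Matrix ι ι ℝ).submatrix id e =
      M.submatrix e e := by
  have h₁ := one_submatrix_mul e (Equiv.refl ι) M
  have h₂ := mul_submatrix_one (Equiv.refl ι) e (M.submatrix e id)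
  simp only [Equiv.coe_refl, Equiv.refl_symm, Function.id_comp] at h₁ h₂
  rw [h₁, h₂, submatrix_submatrix]
  rfl

lemma one_submatrix_val_mulVec {P : ι → Prop} [DecidablePred P] {x : ι → ℝ}
    (hx : ∀ i, ¬ P i → x i = 0) :
    (1 : Matrix ι ι ℝ).submatrix id (Subtype.val : Subtype P → ι) *ᵥ (fun a => x a) = x := by
  ext i
  simp only [mulVec, dotProduct, submatrix_apply, id, one_apply, ite_mul, one_mul, zero_mul,
    @eq_comm _ i, Fintype.sum_subtype_ite_val_eq]
  split_ifs with h
  · rfl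
  · exact (hx i h).symm

end SubtypeEmbedding

section BlockHatInv

variable {n d : ℕ} {T : Matrix (Fin n × Fin d) (Fin n × Fin d) ℝ} {S : Finset (Fin n)}

abbrev blockIncl (n d : ℕ) (S : Finset (Fin n)) :
    Matrix (Fin n × Fin d) {r : Fin n × Fin d // r.1 ∈ S} ℝ :=
  (1 : Matrix (Fin n × Fin d) (Fin n × Fin d) ℝ).submatrix id Subtype.val

lemma blockHatInv_eq_mul (T : Matrix (Fin n × Fin d) (Fin n × Fin d) ℝ) (S : Finset (Fin n)) :
    blockHatInv n d T S = blockIncl n d S * (blockSubMat n d T S)⁻¹ * (blockIncl n d S)ᵀ := by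
  ext p q
  simp only [blockHatInv, of_apply, transpose_submatrix, transpose_one, mul_apply,
    submatrix_apply, one_apply, id_eq, @eq_comm _ p, ite_mul, one_mul, zero_mul,
    Fintype.sum_subtype_ite_val_eq, mul_ite, mul_one, mul_zero]
  split_ifs <;> rfl

lemma blockIncl_transpose_mul_mul (T : Matrix (Fin n × Fin d) (Fin n × Fin d) ℝ) :
    (blockIncl n d S)ᵀ * T * blockIncl n d S = blockSubMat n d T S := by
  rw [transpose_submatrix, transpose_one, one_submatrix_mul_mul_one_submatrix]
  rfl

lemma blockSubMat_posDef (hT : T.PosDef) : (blockSubMat n d T S).PosDef :=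
  hT.submatrix Subtype.val_injective

lemma blockHatInv_posSemidef (hT : T.PosDef) : (blockHatInv n d T S).PosSemidef := by
  rw [blockHatInv_eq_mul, ← conjTranspose_eq_transpose_of_trivial]
  exact (blockSubMat_posDef hT).inv.posSemidef.mul_mul_conjTranspose_same _

lemma blockHatInv_mul_mul_self (hT : T.PosDef) :
    blockHatInv n d T S * T * blockHatInv n d T S = blockHatInv n d T S := by
  rw [blockHatInv_eq_mul, ← blockIncl_transpose_mul_mul]
  exact mul_inv_mul_transpose_mul_mul_self
    (blockIncl_transpose_mul_mul T ▸ (blockSubMat_posDef hT).det_pos.ne'.isUnit)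

lemma blockHatInv_mulVec_mulVec (hT : T.PosDef) {x : Fin n × Fin d → ℝ}
    (hx : ∀ p : Fin n × Fin d, p.1 ∉ S → x p = 0) :
    blockHatInv n d T S *ᵥ (T *ᵥ x) = x := by
  have hxE : blockIncl n d S *ᵥ (fun a => x a) = x := one_submatrix_val_mulVec hx
  rw [blockHatInv_eq_mul, ← blockIncl_transpose_mul_mul, ← hxE]
  exact mul_inv_mul_transpose_mulVec_mulVec
    (blockIncl_transpose_mul_mul T ▸ (blockSubMat_posDef hT).det_pos.ne'.isUnit) _

lemma blockHatInv_mulVec_apply_of_notMem (v : Fin n × Fin d → ℝ) {i : Fin n} (hi : i ∉ S)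
    (b : Fin d) : (blockHatInv n d T S *ᵥ v) (i, b) = 0 := by
  simp [blockHatInv, mulVec, dotProduct, hi]

lemma posSemidef_borderMat_blockHatInv (hT : T.PosDef) {x : Fin n × Fin d → ℝ} {σ : ℝ}
    (hx : ∀ p : Fin n × Fin d, p.1 ∉ S → x p = 0) (hσ : x ⬝ᵥ (T *ᵥ x) ≤ σ) :
    (borderMat (blockHatInv n d T S) x σ).PosSemidef :=
  posSemidef_borderMat_of_mul_mul_self hT.posSemidef (blockHatInv_posSemidef hT).isHermitian
    (blockHatInv_mul_mul_self hT) (blockHatInv_mulVec_mulVec hT hx) hσ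

lemma blockHatInv_univ : blockHatInv n d T Finset.univ = T⁻¹ := by
  let e := Equiv.subtypeUnivEquiv (p := fun r : Fin n × Fin d => r.1 ∈ Finset.univ)
    fun r => Finset.mem_univ r.1
  have h : blockSubMat n d T Finset.univ = T.submatrix e e := rfl
  ext p q
  simp [blockHatInv, h, inv_submatrix_equiv, e]

end BlockHatInv

theorem IsClosed.image_fst_of_isCompact {X Y : Type*} [TopologicalSpace X] [TopologicalSpace Y]
    {C : Set (X × Y)} {K : Set Y} (hC : IsClosed C) (hK : IsCompact K)
    (hCK : ∀ y ∈ C, y.2 ∈ K) : IsClosed (Prod.fst '' C) := by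
  have : CompactSpace K := isCompact_iff_compactSpace.mp hK
  have hC' : IsClosed (Prod.map id Subtype.val ⁻¹' C : Set (X × K)) :=
    hC.preimage (continuous_id.prodMap continuous_subtype_val)
  convert isClosedMap_fst_of_compactSpace _ hC' using 1
  ext x
  constructor
  · rintro ⟨y, hy, rfl⟩
    exact ⟨(y.1, ⟨y.2, hCK y hy⟩), hy, rfl⟩
  · rintro ⟨y, hy, rfl⟩
    exact ⟨_, hy, rfl⟩

section Lift

variable {n d : ℕ} {T : Matrix (Fin n × Fin d) (Fin n × Fin d) ℝ}

lemma indicator_blockHatInv_mem_PB (S : Finset (Fin n)) :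
    ((fun i => if i ∈ S then (1 : ℝ) else 0), blockHatInv n d T S) ∈ PB n d T :=
  subset_convexHull ℝ _ ⟨S, rfl⟩

lemma isCompact_PB : IsCompact (PB n d T) :=
  Set.Finite.isCompact_convexHull (𝕜 := ℝ) <| (Set.finite_range fun S : Finset (Fin n) =>
    ((fun i => if i ∈ S then (1 : ℝ) else 0), blockHatInv n d T S)).subset
      fun _ ⟨S, hS⟩ => ⟨S, hS.symm⟩

def liftedSet (n d : ℕ) (T : Matrix (Fin n × Fin d) (Fin n × Fin d) ℝ) :
    Set (((Fin n × Fin d → ℝ) × (Fin n → ℝ) × ℝ) × Matrix (Fin n × Fin d) (Fin n × Fin d) ℝ) :=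
  {y | (borderMat y.2 y.1.1 y.1.2.2).PosSemidef ∧ (y.1.2.1, y.2) ∈ PB n d T}

lemma image_fst_liftedSet :
    Prod.fst '' liftedSet n d T =
      {p | ∃ W, (borderMat W p.1 p.2.2).PosSemidef ∧ (p.2.1, W) ∈ PB n d T} := by
  ext p
  constructor
  · rintro ⟨⟨_, W⟩, hy, rfl⟩
    exact ⟨W, hy⟩
  · rintro ⟨W, hy⟩
    exact ⟨(p, W), hy, rfl⟩

lemma convex_liftedSet : Convex ℝ (liftedSet n d T) := by
  intro y₁ hy₁ y₂ hy₂ a b ha hb hab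
  refine ⟨?_, convex_convexHull ℝ _ hy₁.2 hy₂.2 ha hb hab⟩
  show (borderMat (a • y₁.2 + b • y₂.2) (a • y₁.1.1 + b • y₂.1.1)
    (a * y₁.1.2.2 + b * y₂.1.2.2)).PosSemidef
  rw [borderMat_add_smul]
  exact (hy₁.1.smul ha).add (hy₂.1.smul hb)

lemma isClosed_liftedSet : IsClosed (liftedSet n d T) := by
  let V := ((Fin n × Fin d → ℝ) × (Fin n → ℝ) × ℝ) × Matrix (Fin n × Fin d) (Fin n × Fin d) ℝ
  show IsClosed ((fun y : V => borderMat y.2 y.1.1 y.1.2.2) ⁻¹' {M | M.PosSemidef} ∩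
    (fun y : V => (y.1.2.1, y.2)) ⁻¹' PB n d T)
  refine (isClosed_setOf_posSemidef.preimage ?_).inter
    ((isCompact_PB (T := T)).isClosed.preimage ?_)
  all_goals fun_prop

lemma XbarB_subset_image_fst_liftedSet (hT : T.PosDef) :
    XbarB n d T ⊆ Prod.fst '' liftedSet n d T := by
  rintro ⟨x, z, τ⟩ ⟨hz, hτ, hx⟩
  dsimp only at hz hτ hx
  let S := Finset.univ.filter fun i => z i = 1
  have hzS : z = fun i => if i ∈ S then 1 else 0 := by
    ext i
    rcases hz i with h | h <;> simp [S, h]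
  have hxS : ∀ p : Fin n × Fin d, p.1 ∉ S → x p = 0 := fun p hp =>
    hx p.1 ((hz p.1).resolve_right (by simpa [S] using hp)) p.2
  refine ⟨((x, z, τ), blockHatInv n d T S), ⟨?_, ?_⟩, rfl⟩
  · exact posSemidef_borderMat_blockHatInv hT hxS hτ
  · simpa only [hzS] using indicator_blockHatInv_mem_PB S

lemma convex_image_fst_liftedSet : Convex ℝ (Prod.fst '' liftedSet n d T) :=
  convex_liftedSet.linear_image (LinearMap.fst ℝ _ _)

lemma isClosed_image_fst_liftedSet : IsClosed (Prod.fst '' liftedSet n d T) :=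
  isClosed_liftedSet.image_fst_of_isCompact (isCompact_PB.image continuous_snd)
    fun _ hy => ⟨_, hy.2, rfl⟩

lemma indicator_blockHatInv_mem_XbarB (hT : T.PosDef) (S : Finset (Fin n))
    (u : Fin n × Fin d → ℝ) {s : ℝ} (hs : 0 ≤ s) :
    (blockHatInv n d T S *ᵥ u, (fun i => if i ∈ S then (1 : ℝ) else 0),
      u ⬝ᵥ (blockHatInv n d T S *ᵥ u) + s) ∈ XbarB n d T := by
  refine ⟨fun i => by by_cases hi : i ∈ S <;> simp [hi], ?_, fun i hi b => ?_⟩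
  · dsimp only
    rw [(blockHatInv_posSemidef hT).isHermitian.dotProduct_mulVec_mul_mul_self
      (blockHatInv_mul_mul_self hT)]
    linarith
  · exact blockHatInv_mulVec_apply_of_notMem u (by simpa using hi) b

lemma mem_convexHull_XbarB_of_mem_liftedSet (hT : T.PosDef) {y}
    (hy : y ∈ liftedSet n d T) (hW : y.2.PosDef) : y.1 ∈ convexHull ℝ (XbarB n d T) := by
  obtain ⟨⟨x, z, τ⟩, W⟩ := y
  obtain ⟨hB, hPB⟩ := hy
  dsimp only at hB hPB hW ⊢
  set u := W⁻¹ *ᵥ x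
  have hWu : W *ᵥ u = x := by
    rw [mulVec_mulVec, mul_nonsing_inv _ ((isUnit_iff_isUnit_det W).1 hW.isUnit), one_mulVec]
  have hs : 0 ≤ τ - u ⬝ᵥ (W *ᵥ u) := by
    have h := (posSemidef_borderMat_iff.1 hB).2 (-u) 1
    have hxu : x ⬝ᵥ u = u ⬝ᵥ (W *ᵥ u) := by rw [← hWu, hW.isHermitian.mulVec_dotProduct]
    simp only [mulVec_neg, dotProduct_neg, neg_dotProduct, neg_neg, hxu] at h
    linarith
  let L : ((Fin n → ℝ) × Matrix (Fin n × Fin d) (Fin n × Fin d) ℝ) →ₗ[ℝ]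
      (Fin n × Fin d → ℝ) × (Fin n → ℝ) × ℝ :=
    { toFun := fun q => (q.2 *ᵥ u, q.1, u ⬝ᵥ (q.2 *ᵥ u))
      map_add' := fun q r => by simp [add_mulVec, dotProduct_add]
      map_smul' := fun c q => by simp [smul_mulVec] }
  let f := L.toAffineMap + AffineMap.const ℝ _ ((0, 0, τ - u ⬝ᵥ (W *ᵥ u)) :
    (Fin n × Fin d → ℝ) × (Fin n → ℝ) × ℝ)
  have hf : f (z, W) = (x, z, τ) := by
    simp [f, L, hWu]
  have hfV : f '' {q | ∃ S : Finset (Fin n),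
      q = ((fun i => if i ∈ S then (1 : ℝ) else 0), blockHatInv n d T S)} ⊆ XbarB n d T := by
    rintro _ ⟨_, ⟨S, rfl⟩, rfl⟩
    simpa [f, L] using indicator_blockHatInv_mem_XbarB hT S u hs
  rw [← hf]
  exact convexHull_mono hfV (f.image_convexHull _ ▸ Set.mem_image_of_mem f hPB)

lemma image_fst_liftedSet_subset_closure (hT : T.PosDef) :
    Prod.fst '' liftedSet n d T ⊆ closure (convexHull ℝ (XbarB n d T)) := by
  rintro _ ⟨⟨p, W⟩, hy, rfl⟩
  let q : (Fin n × Fin d → ℝ) × (Fin n → ℝ) × ℝ :=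
    (p.1, fun i => if i ∈ Finset.univ then 1 else 0, p.1 ⬝ᵥ (T *ᵥ p.1))
  have hq : (q, T⁻¹) ∈ liftedSet n d T := by
    rw [← blockHatInv_univ]
    exact ⟨posSemidef_borderMat_blockHatInv hT (by simp) le_rfl, indicator_blockHatInv_mem_PB _⟩
  have hseg : openSegment ℝ p q ⊆ convexHull ℝ (XbarB n d T) := by
    rintro _ ⟨a, b, ha, hb, hab, rfl⟩
    exact mem_convexHull_XbarB_of_mem_liftedSet hT (convex_liftedSet hy hq ha.le hb.le hab)
      (PosDef.posSemidef_add (hy.1.of_borderMat.smul ha.le) (hT.inv.smul hb))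
  exact closure_mono hseg (segment_subset_closure_openSegment (left_mem_segment ℝ p q))

end Lift

theorem stmt_4_general (n d : ℕ)
    (T : Matrix (Fin n × Fin d) (Fin n × Fin d) ℝ) (hT : T.PosDef) :
    closure (convexHull ℝ (XbarB n d T)) =
      {p : (Fin n × Fin d → ℝ) × (Fin n → ℝ) × ℝ |
        ∃ W : Matrix (Fin n × Fin d) (Fin n × Fin d) ℝ,
          (borderMat W p.1 p.2.2).PosSemidef ∧ (p.2.1, W) ∈ PB n d T} := by
  rw [← image_fst_liftedSet]
  exact (closure_minimal (convexHull_min (XbarB_subset_image_fst_liftedSet hT)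
    convex_image_fst_liftedSet) isClosed_image_fst_liftedSet).antisymm
    (image_fst_liftedSet_subset_closure hT)

theorem stmt_4 (n d : ℕ) (hn : 1 ≤ n) (hd : 1 ≤ d)
    (T : Matrix (Fin n × Fin d) (Fin n × Fin d) ℝ) (hT : T.PosDef) :
    closure (convexHull ℝ (XbarB n d T)) =
      {p : (Fin n × Fin d → ℝ) × (Fin n → ℝ) × ℝ |
        ∃ W : Matrix (Fin n × Fin d) (Fin n × Fin d) ℝ,
          (borderMat W p.1 p.2.2).PosSemidef ∧ (p.2.1, W) ∈ PB n d T} :=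
  stmt_4_general n d T hT
end

section
/- Let n ≥ 1 and let u, v : {1,…,n} → ℝ satisfy Assumption 1, with Q = Q(u,v). Fix z ∈ {0,1}^n and let S = {ℓ ∈ {1,…,n} : z_ℓ = 1}. Then there exists exactly one vector w = (w_{ij})_{0 ≤ i < j ≤ n+1} satisfying the path constraints for z, and for this w the matrix W = Σ_{1 ≤ i < j ≤ n+1} Λ_{i→j} w_{ij} equals hat(Q_S⁻¹). -/
open Matrix BigOperators
open scoped Classical

/-- The path constraints for `z`, on the node set `{0, 1, …, n+1}` (as `Fin (n+2)`);
`w i j` for `i < j` are the arc variables, entries with `¬ i < j` are zero. -/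
def PathCon (n : ℕ) (z : Fin n → ℝ) (w : Fin (n + 2) → Fin (n + 2) → ℝ) : Prop :=
  (∀ i j : Fin (n + 2), ¬i < j → w i j = 0) ∧
  (∀ i j : Fin (n + 2), 0 ≤ w i j) ∧
  (∀ ℓ : Fin (n + 2),
    (∑ i : Fin (n + 2), w i ℓ) - ∑ j : Fin (n + 2), w ℓ j =
      if (ℓ : ℕ) = 0 then -1 else if (ℓ : ℕ) = n + 1 then 1 else 0) ∧
  (∀ ℓ : Fin n, z ℓ = ∑ i : Fin (n + 2), w i ⟨(ℓ : ℕ) + 1, by omega⟩)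

/-- `Λ_{i→j}` indexed by the nodes `0,…,n+1`: zero unless `1 ≤ i < j ≤ n+1`. -/
noncomputable def LamNode (n : ℕ) (u v : Fin n → ℝ) (i j : Fin (n + 2)) :
    Matrix (Fin n) (Fin n) ℝ :=
  if hi : 1 ≤ (i : ℕ) ∧ (i : ℕ) ≤ n then
    if (j : ℕ) = n + 1 then LamEnd n u v ⟨(i : ℕ) - 1, by omega⟩
    else if hj : (i : ℕ) < (j : ℕ) ∧ (j : ℕ) ≤ n then
      LamMid n u v ⟨(i : ℕ) - 1, by omega⟩ ⟨(j : ℕ) - 1, by omega⟩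
    else 0
  else 0

/-
The nodes `0`, `n+1` and the middle nodes `ℓ + 1` with `z ℓ = 1` are *active*. A feasible flow
vanishes on arcs at inactive nodes (their inflow `z ℓ` is `0`), and every cut `{i < k}` carries
exactly one unit, which for an active `k` is all of its inflow; so no arc jumps over an active
node, and the only feasible `w` is the unit flow along consecutive active nodes.

For `Λ = Λ_{i→j}` with `i → j` such an arc and an active column `q`, the row `p` of `Λ Q` is
`u q / u p` on the columns `q ≤ p` if `p` is the tail `i`, minus the same on `q < p` if `p` is
the head `j`. Summing against `w`, the outflow and the inflow of an active `p` are both `1`, so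
`W Q` is the identity on `S × S`, while `W` vanishes off `S × S`; hence `W = hat(Q_S⁻¹)`.
-/

namespace FactorizablePath

variable {n : ℕ}

lemma sum_sub_sum_eq_sum_compl {ι R : Type*} [Fintype ι] [DecidableEq ι] [AddCommGroup R]
    (w : ι → ι → R) (T : Finset ι) :
    ∑ i ∈ T, (∑ j, w i j - ∑ j, w j i) = ∑ i ∈ T, ∑ j ∈ Tᶜ, (w i j - w j i) := by
  have hT : ∑ i ∈ T, ∑ j ∈ T, w i j = ∑ i ∈ T, ∑ j ∈ T, w j i := Finset.sum_comm
  simp only [← Finset.sum_add_sum_compl T, Finset.sum_sub_distrib, Finset.sum_add_distrib, hT]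
  abel

lemma sum_ite_eq_of_existsUnique {ι R : Type*} [Fintype ι] [AddCommMonoid R] {p : ι → Prop}
    [DecidablePred p] (h : ∃! i, p i) (c : R) : ∑ i, (if p i then c else 0) = c := by
  obtain ⟨i, hi, huniq⟩ := h
  rw [Fintype.sum_eq_single i fun k hk => if_neg fun hpk => hk (huniq k hpk), if_pos hi]

lemma smul_rankOne_mul_apply {ι R : Type*} [Fintype ι] [Semiring R] (c : R) (x y : ι → R)
    (Q : Matrix ι ι R) (p q : ι) :
    ((c • Matrix.of fun a b => x a * y b) * Q) p q = c * x p * ∑ k, y k * Q k q := by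
  simp only [Matrix.smul_apply, Matrix.mul_apply, Matrix.of_apply, smul_eq_mul,
    Finset.mul_sum, mul_assoc]

lemma sum_indicator_sub_mul {ι R : Type*} [Fintype ι] [DecidableEq ι] [Ring R] (a b : ι)
    (r : R) (f : ι → R) :
    ∑ k, ((if k = a then 1 else 0) - r * (if k = b then 1 else 0)) * f k = f a - r * f b := by
  simp [sub_mul, Finset.sum_sub_distrib]

lemma hatInv_eq_of_mul_eq {Q M : Matrix (Fin n) (Fin n) ℝ} {S : Finset (Fin n)}
    (hM : ∀ p q, M p q ≠ 0 → p ∈ S ∧ q ∈ S)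
    (hMQ : ∀ p ∈ S, ∀ q ∈ S, (M * Q) p q = if p = q then 1 else 0) :
    hatInv n Q S = M := by
  have hprod : M.submatrix (↑) (↑) * subMat n Q S = 1 := by
    ext p q
    have h := hMQ p p.2 q q.2
    rw [Matrix.mul_apply, ← Finset.sum_subset (Finset.subset_univ S) fun k _ hk => ?_,
      ← Finset.sum_coe_sort S] at h
    · rw [Matrix.mul_apply, Matrix.one_apply]
      exact h.trans (if_congr Subtype.val_inj rfl rfl)
    · by_contra hne
      exact hk (hM _ _ (left_ne_zero_of_mul hne)).2
  ext a b
  simp only [hatInv, Matrix.of_apply]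
  split_ifs with ha hb
  · rw [Matrix.inv_eq_left_inv hprod]
    rfl
  · by_contra hne
    exact hb (hM a b (Ne.symm hne)).2
  · by_contra hne
    exact ha (hM a b (Ne.symm hne)).1

/-- The middle node `ℓ + 1` of `{0, …, n+1}` carrying the variable `z ℓ`. -/
def node (ℓ : Fin n) : Fin (n + 2) := ⟨ℓ + 1, by omega⟩

@[simp] lemma val_node (ℓ : Fin n) : (node ℓ : ℕ) = ℓ + 1 := rfl

@[simp] lemma node_inj {a b : Fin n} : node a = node b ↔ a = b := by
  simp [Fin.ext_iff]

@[simp] lemma node_lt_node {a b : Fin n} : node a < node b ↔ a < b := by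
  rw [Fin.lt_def, Fin.lt_def, val_node, val_node, Nat.add_lt_add_iff_right]

@[simp] lemma node_ne_zero (a : Fin n) : node a ≠ 0 := by
  simp [Fin.ext_iff]

@[simp] lemma node_ne_last (a : Fin n) : node a ≠ Fin.last (n + 1) := by
  simp [Fin.ext_iff]; omega

lemma node_cases (i : Fin (n + 2)) : i = 0 ∨ i = Fin.last (n + 1) ∨ ∃ a, i = node a := by
  rcases i with ⟨i, hi⟩
  rcases i with _ | i
  · exact Or.inl rfl
  · by_cases h : i = n
    · subst h; exact Or.inr (Or.inl rfl)
    · exact Or.inr (Or.inr ⟨⟨i, by omega⟩, rfl⟩)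

variable {i j k : Fin (n + 2)}

lemma arc_cases (hij : i < j) :
    i = 0 ∨ (∃ a, i = node a ∧ j = Fin.last (n + 1)) ∨
      ∃ a b, a < b ∧ i = node a ∧ j = node b := by
  rcases node_cases i with rfl | rfl | ⟨a, rfl⟩
  · exact Or.inl rfl
  · exact absurd hij (Fin.le_last j).not_gt
  rcases node_cases j with rfl | rfl | ⟨b, rfl⟩
  · exact absurd hij (Fin.zero_le _).not_gt
  · exact Or.inr (Or.inl ⟨a, rfl, rfl⟩)
  · exact Or.inr (Or.inr ⟨a, b, node_lt_node.1 hij, rfl, rfl⟩)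

def IsActive (z : Fin n → ℝ) (i : Fin (n + 2)) : Prop := ∀ ℓ, node ℓ = i → z ℓ = 1

def IsArc (z : Fin n → ℝ) (i j : Fin (n + 2)) : Prop :=
  i < j ∧ IsActive z i ∧ IsActive z j ∧ ∀ k, i < k → k < j → ¬ IsActive z k

noncomputable def arcFlow (z : Fin n → ℝ) (i j : Fin (n + 2)) : ℝ :=
  if IsArc z i j then 1 else 0

variable {z : Fin n → ℝ}

lemma isActive_zero : IsActive z 0 := fun ℓ h => absurd h (node_ne_zero ℓ)

lemma isActive_last : IsActive z (Fin.last (n + 1)) := fun ℓ h => absurd h (node_ne_last ℓ)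

@[simp] lemma isActive_node {ℓ : Fin n} : IsActive z (node ℓ) ↔ z ℓ = 1 :=
  ⟨fun h => h ℓ rfl, fun h _ he => node_inj.1 he ▸ h⟩

lemma IsArc.left_unique {i' : Fin (n + 2)} (h : IsArc z i j) (h' : IsArc z i' j) : i' = i := by
  rcases lt_trichotomy i' i with hlt | heq | hgt
  · exact absurd h.2.1 (h'.2.2.2 i hlt h.1)
  · exact heq
  · exact absurd h'.2.1 (h.2.2.2 i' hgt h'.1)

lemma IsArc.right_unique {j' : Fin (n + 2)} (h : IsArc z i j) (h' : IsArc z i j') : j' = j := by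
  rcases lt_trichotomy j' j with hlt | heq | hgt
  · exact absurd h'.2.2.1 (h.2.2.2 j' h'.1 hlt)
  · exact heq
  · exact absurd h.2.2.1 (h'.2.2.2 j h.1 hgt)

lemma exists_isArc_left (hj : IsActive z j) (hj0 : j ≠ 0) : ∃ i, IsArc z i j := by
  obtain ⟨i, hi, hmax⟩ :=
    (Finset.univ.filter fun k => k < j ∧ IsActive z k).exists_max_image id
    ⟨0, by simpa [Fin.pos_iff_ne_zero] using ⟨hj0, isActive_zero⟩⟩
  simp only [Finset.mem_filter, Finset.mem_univ, true_and, id, and_imp] at hi hmax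
  exact ⟨i, hi.1, hi.2, hj, fun k hik hkj hk => (hmax k hkj hk).not_gt hik⟩

lemma exists_isArc_right (hi : IsActive z i) (hil : i ≠ Fin.last (n + 1)) :
    ∃ j, IsArc z i j := by
  obtain ⟨j, hj, hmin⟩ :=
    (Finset.univ.filter fun k => i < k ∧ IsActive z k).exists_min_image id
    ⟨Fin.last _, by simpa [Fin.lt_last_iff_ne_last] using ⟨hil, isActive_last⟩⟩
  simp only [Finset.mem_filter, Finset.mem_univ, true_and, id, and_imp] at hj hmin
  exact ⟨j, hj.1, hi, hj.2, fun k hik hkj hk => (hmin k hik hk).not_gt hkj⟩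

lemma sum_arcFlow_left (j : Fin (n + 2)) :
    ∑ i, arcFlow z i j = if IsActive z j ∧ j ≠ 0 then 1 else 0 := by
  split_ifs with hj
  · obtain ⟨i, hi⟩ := exists_isArc_left hj.1 hj.2
    exact sum_ite_eq_of_existsUnique ⟨i, hi, fun _ hi' => hi.left_unique hi'⟩ 1
  · refine Finset.sum_eq_zero fun i _ => if_neg fun hij => hj ⟨hij.2.2.1, ?_⟩
    exact (lt_of_le_of_lt (Fin.zero_le i) hij.1).ne'

lemma sum_arcFlow_right (i : Fin (n + 2)) :
    ∑ j, arcFlow z i j = if IsActive z i ∧ i ≠ Fin.last (n + 1) then 1 else 0 := by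
  split_ifs with hi
  · obtain ⟨j, hj⟩ := exists_isArc_right hi.1 hi.2
    exact sum_ite_eq_of_existsUnique ⟨j, hj, fun _ hj' => hj.right_unique hj'⟩ 1
  · refine Finset.sum_eq_zero fun j _ => if_neg fun hij => hi ⟨hij.2.1, ?_⟩
    exact (lt_of_lt_of_le hij.1 (Fin.le_last j)).ne

lemma pathCon_arcFlow (hz : ∀ ℓ, z ℓ = 0 ∨ z ℓ = 1) : PathCon n z (arcFlow z) := by
  refine ⟨fun i j hij => if_neg fun h => hij h.1,
    fun i j => by unfold arcFlow; split_ifs <;> norm_num, fun ℓ => ?_, fun ℓ => ?_⟩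
  · rw [sum_arcFlow_left, sum_arcFlow_right]
    rcases node_cases ℓ with rfl | rfl | ⟨a, rfl⟩
    · simp [isActive_zero]
    · simp [isActive_last]
    · simp [a.isLt.ne]
  · have := sum_arcFlow_left (z := z) (node ℓ)
    simp only [isActive_node, ne_eq, node_ne_zero, not_false_eq_true, and_true] at this
    rw [show (⟨ℓ + 1, _⟩ : Fin (n + 2)) = node ℓ from rfl, this]
    rcases hz ℓ with h | h <;> simp [h]

variable {w : Fin (n + 2) → Fin (n + 2) → ℝ}

namespace PathCon

lemma inflow_node (hw : PathCon n z w) (ℓ : Fin n) : ∑ i, w i (node ℓ) = z ℓ :=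
  (hw.2.2.2 ℓ).symm

lemma outflow_node (hw : PathCon n z w) (ℓ : Fin n) : ∑ j, w (node ℓ) j = z ℓ := by
  have h := hw.2.2.1 (node ℓ)
  simp only [val_node, Nat.add_eq_zero_iff, one_ne_zero, and_false, if_false,
    Nat.add_right_cancel_iff, ℓ.isLt.ne] at h
  linarith [inflow_node hw ℓ]

lemma inflow_last (hw : PathCon n z w) : ∑ i, w i (Fin.last (n + 1)) = 1 := by
  have h := hw.2.2.1 (Fin.last _)
  have hout : ∑ j, w (Fin.last (n + 1)) j = 0 :=
    Finset.sum_eq_zero fun j _ => hw.1 _ _ (Fin.le_last j).not_gt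
  simp only [Fin.val_last, Nat.add_eq_zero_iff, one_ne_zero, and_false, if_false, if_true,
    hout] at h
  linarith

lemma netOutflow (hw : PathCon n z w) (hi : i ≠ Fin.last (n + 1)) :
    ∑ j, w i j - ∑ j, w j i = if i = 0 then 1 else 0 := by
  have h := hw.2.2.1 i
  have hi' : (i : ℕ) ≠ n + 1 := fun h => hi (Fin.ext h)
  simp only [hi', if_false, Fin.ext_iff, Fin.val_zero] at h ⊢
  split_ifs at h ⊢ <;> linarith

lemma cut_eq_one (hw : PathCon n z w) (hk : k ≠ 0) :
    ∑ i ∈ Finset.Iio k, ∑ j ∈ (Finset.Iio k)ᶜ, w i j = 1 := by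
  have h := sum_sub_sum_eq_sum_compl w (Finset.Iio k)
  rw [Finset.sum_congr rfl fun i (hi : i ∈ Finset.Iio k) =>
      netOutflow hw (Fin.ne_last_of_lt (Finset.mem_Iio.1 hi)),
    Finset.sum_ite_eq', if_pos (Finset.mem_Iio.2 (Fin.pos_iff_ne_zero.2 hk))] at h
  rw [h]
  refine Finset.sum_congr rfl fun i hi => Finset.sum_congr rfl fun j hj => ?_
  have hji : ¬ j < i := by
    simp only [Finset.mem_Iio, Finset.mem_compl, not_lt] at hi hj
    exact (lt_of_lt_of_le hi hj).not_gt
  rw [hw.1 j i hji, sub_zero]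

lemma inflow_eq_one (hw : PathCon n z w) (hj : IsActive z j) (hj0 : j ≠ 0) :
    ∑ i, w i j = 1 := by
  rcases node_cases j with rfl | rfl | ⟨ℓ, rfl⟩
  · exact absurd rfl hj0
  · exact inflow_last hw
  · rw [inflow_node hw]
    exact isActive_node.1 hj

lemma exists_node_of_not_isActive (hz : ∀ ℓ, z ℓ = 0 ∨ z ℓ = 1) (hi : ¬ IsActive z i) :
    ∃ ℓ, node ℓ = i ∧ z ℓ = 0 := by
  simp only [IsActive, not_forall] at hi
  obtain ⟨ℓ, hℓ, hz1⟩ := hi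
  exact ⟨ℓ, hℓ, (hz ℓ).resolve_right hz1⟩

lemma eq_zero_of_not_isActive_right (hw : PathCon n z w) (hz : ∀ ℓ, z ℓ = 0 ∨ z ℓ = 1)
    (hj : ¬ IsActive z j) : w i j = 0 := by
  obtain ⟨ℓ, rfl, hℓ⟩ := exists_node_of_not_isActive hz hj
  have h0 : ∑ i', w i' (node ℓ) = 0 := by rw [inflow_node hw, hℓ]
  exact (Finset.sum_eq_zero_iff_of_nonneg fun i' _ => hw.2.1 i' _).1 h0 i (Finset.mem_univ _)

lemma eq_zero_of_not_isActive_left (hw : PathCon n z w) (hz : ∀ ℓ, z ℓ = 0 ∨ z ℓ = 1)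
    (hi : ¬ IsActive z i) : w i j = 0 := by
  obtain ⟨ℓ, rfl, hℓ⟩ := exists_node_of_not_isActive hz hi
  have h0 : ∑ j', w (node ℓ) j' = 0 := by rw [outflow_node hw, hℓ]
  exact (Finset.sum_eq_zero_iff_of_nonneg fun j' _ => hw.2.1 _ j').1 h0 j (Finset.mem_univ _)

lemma eq_zero_of_isActive_between (hw : PathCon n z w) (hik : i < k) (hkj : k < j)
    (hk : IsActive z k) : w i j = 0 := by
  set T := Finset.Iio k
  have hk0 : k ≠ 0 := (lt_of_le_of_lt (Fin.zero_le i) hik).ne'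
  have hin : ∑ i' ∈ T, w i' k = 1 := by
    rw [← inflow_eq_one hw hk hk0]
    refine Finset.sum_subset (Finset.subset_univ T) fun i' _ hi' => hw.1 i' k ?_
    simpa [T] using hi'
  have hkT : k ∈ Tᶜ := by simp [T]
  have hcut := cut_eq_one hw hk0
  rw [Finset.sum_congr rfl fun i' _ => (Finset.add_sum_erase _ _ hkT).symm,
    Finset.sum_add_distrib, hin, add_eq_left,
    Finset.sum_eq_zero_iff_of_nonneg fun i' _ => Finset.sum_nonneg fun j' _ => hw.2.1 i' j'] at hcut
  refine (Finset.sum_eq_zero_iff_of_nonneg fun j' _ => hw.2.1 i j').1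
    (hcut i (by simpa [T] using hik)) j ?_
  simp [T, hkj.ne', hkj.le]

lemma isArc_of_ne_zero (hw : PathCon n z w) (hz : ∀ ℓ, z ℓ = 0 ∨ z ℓ = 1)
    (h : w i j ≠ 0) : IsArc z i j := by
  by_contra hnot
  refine h ?_
  by_cases hij : i < j
  swap; · exact hw.1 i j hij
  by_cases hi : IsActive z i
  swap; · exact eq_zero_of_not_isActive_left hw hz hi
  by_cases hj : IsActive z j
  swap; · exact eq_zero_of_not_isActive_right hw hz hj
  obtain ⟨k, hik, hkj, hk⟩ : ∃ k, i < k ∧ k < j ∧ IsActive z k := by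
    simpa [IsArc, hij, hi, hj] using hnot
  exact eq_zero_of_isActive_between hw hik hkj hk

lemma eq_one_of_isArc (hw : PathCon n z w) (hz : ∀ ℓ, z ℓ = 0 ∨ z ℓ = 1)
    (h : IsArc z i j) : w i j = 1 := by
  have hj0 : j ≠ 0 := (lt_of_le_of_lt (Fin.zero_le i) h.1).ne'
  rw [← inflow_eq_one hw h.2.2.1 hj0, eq_comm]
  refine Fintype.sum_eq_single i fun i' hi' => ?_
  by_contra hne
  exact hi' (h.left_unique (isArc_of_ne_zero hw hz hne))

lemma eq_arcFlow (hw : PathCon n z w) (hz : ∀ ℓ, z ℓ = 0 ∨ z ℓ = 1) : w = arcFlow z := by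
  funext i j
  unfold arcFlow
  split_ifs with h
  · exact eq_one_of_isArc hw hz h
  · by_contra hne
    exact h (isArc_of_ne_zero hw hz hne)

end PathCon

variable {u v : Fin n → ℝ}

lemma facQ_apply_of_le {a q : Fin n} (h : q ≤ a) : facQ n u v a q = u q * v a := by
  rcases h.lt_or_eq with h | rfl
  · simp [facQ, h.not_ge]
  · simp [facQ]

lemma facQ_apply_of_ge {a q : Fin n} (h : a ≤ q) : facQ n u v a q = u a * v q := by
  simp [facQ, h]

namespace Assumption1

lemma u_ne_zero (hA : Assumption1 n u v) (a : Fin n) : u a ≠ 0 :=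
  left_ne_zero_of_mul (hA.1 a).ne'

lemma v_ne_zero (hA : Assumption1 n u v) (a : Fin n) : v a ≠ 0 :=
  right_ne_zero_of_mul (hA.1 a).ne'

lemma det_ne_zero (hA : Assumption1 n u v) {a b : Fin n} (hab : a < b) :
    u b * v a - u a * v b ≠ 0 :=
  right_ne_zero_of_mul (hA.2 a b hab).ne'

end Assumption1

lemma lamMid_mul_facQ_apply (hA : Assumption1 n u v) {a b : Fin n} (hab : a < b) (p : Fin n)
    {q : Fin n} (hq : q ≤ a ∨ b ≤ q) :
    (LamMid n u v a b * facQ n u v) p q =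
      ((if p = a then 1 else 0) - u a / u b * (if p = b then 1 else 0)) *
        (if q ≤ a then u q / u a else 0) := by
  have hua := Assumption1.u_ne_zero hA a
  have hub := Assumption1.u_ne_zero hA b
  have hD := Assumption1.det_ne_zero hA hab
  rw [LamMid, smul_rankOne_mul_apply, sum_indicator_sub_mul]
  rcases hq with hq | hq
  · rw [facQ_apply_of_le hq, facQ_apply_of_le (hq.trans hab.le), if_pos hq]
    field_simp
  · rw [facQ_apply_of_ge (hab.le.trans hq), facQ_apply_of_ge hq, if_neg (hab.trans_le hq).not_ge]
    field_simp
    ring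

lemma lamEnd_mul_facQ_apply (hA : Assumption1 n u v) (a p : Fin n) {q : Fin n} (hq : q ≤ a) :
    (LamEnd n u v a * facQ n u v) p q = (if p = a then 1 else 0) * (u q / u a) := by
  have hua := Assumption1.u_ne_zero hA a
  have hva := Assumption1.v_ne_zero hA a
  rw [LamEnd, smul_rankOne_mul_apply]
  simp only [ite_mul, one_mul, zero_mul, Finset.sum_ite_eq', Finset.mem_univ, if_true,
    facQ_apply_of_le hq]
  split_ifs
  · field_simp
  · simp

@[simp] lemma lamNode_zero_left : LamNode n u v 0 j = 0 := by
  simp [LamNode]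

lemma lamNode_node_last (a : Fin n) :
    LamNode n u v (node a) (Fin.last (n + 1)) = LamEnd n u v a := by
  simp [LamNode]

lemma lamNode_node_node {a b : Fin n} (hab : a < b) :
    LamNode n u v (node a) (node b) = LamMid n u v a b := by
  have := Fin.lt_def.1 hab
  simp [LamNode, b.isLt.ne, this]

lemma lamNode_apply_ne_zero (hij : i < j) {p q : Fin n} (h : LamNode n u v i j p q ≠ 0) :
    (i = node p ∨ j = node p) ∧ (i = node q ∨ j = node q) := by
  rcases arc_cases hij with rfl | ⟨a, rfl, rfl⟩ | ⟨a, b, hab, rfl, rfl⟩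
  · simp at h
  · rw [lamNode_node_last] at h
    simp only [LamEnd, Matrix.smul_apply, Matrix.of_apply, smul_eq_mul] at h
    constructor <;> by_contra hne <;> simp_all
  · rw [lamNode_node_node hab] at h
    simp only [LamMid, Matrix.smul_apply, Matrix.of_apply, smul_eq_mul] at h
    constructor <;> by_contra hne <;> simp only [node_inj, not_or] at hne <;>
      simp [Ne.symm hne.1, Ne.symm hne.2] at h

lemma lamNode_mul_facQ_apply (hA : Assumption1 n u v) (hij : i < j) {q : Fin n}
    (hq : ¬ (i < node q ∧ node q < j)) (p : Fin n) :
    (LamNode n u v i j * facQ n u v) p q =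
      (if i = node p then (if q ≤ p then u q / u p else 0) else 0) -
        (if j = node p then (if q < p then u q / u p else 0) else 0) := by
  rcases arc_cases hij with rfl | ⟨a, rfl, rfl⟩ | ⟨a, b, hab, rfl, rfl⟩
  · have hqp : j = node p → ¬ q < p := fun hj hqp =>
      hq ⟨Fin.pos_iff_ne_zero.2 (node_ne_zero q), hj ▸ node_lt_node.2 hqp⟩
    by_cases hj : j = node p <;> simp [hj, hqp, (node_ne_zero p).symm]
  · have hqa : q ≤ a := by
      simpa [Fin.lt_last_iff_ne_last] using hq
    rw [lamNode_node_last, lamEnd_mul_facQ_apply hA a p hqa]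
    by_cases hp : p = a
    · subst hp; simp [hqa, (node_ne_last p).symm]
    · simp [hp, Ne.symm hp, (node_ne_last p).symm]
  · have hqab : q ≤ a ∨ b ≤ q := by
      simpa [not_lt, imp_iff_not_or] using hq
    rw [lamNode_node_node hab, lamMid_mul_facQ_apply hA hab p hqab]
    have hua := Assumption1.u_ne_zero hA a
    by_cases hpa : p = a
    · subst hpa
      simp [hab.ne, hab.ne']
    by_cases hpb : p = b
    · subst hpb
      rcases hqab with hqa | hbq
      · simp [hpa, Ne.symm hpa, hqa, hqa.trans_lt hab]
        field_simp
      · simp [hpa, Ne.symm hpa, hbq.not_gt, (hab.trans_le hbq).not_ge]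
    · simp [hpa, hpb, Ne.symm hpa, Ne.symm hpb]

lemma sum_smul_lamNode_apply_ne_zero (hz : ∀ ℓ, z ℓ = 0 ∨ z ℓ = 1) (hw : PathCon n z w)
    {p q : Fin n} (h : (∑ i, ∑ j, w i j • LamNode n u v i j) p q ≠ 0) :
    z p = 1 ∧ z q = 1 := by
  simp only [Matrix.sum_apply, Matrix.smul_apply, smul_eq_mul] at h
  obtain ⟨i, -, hi⟩ := Finset.exists_ne_zero_of_sum_ne_zero h
  obtain ⟨j, -, hij⟩ := Finset.exists_ne_zero_of_sum_ne_zero hi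
  have harc := PathCon.isArc_of_ne_zero hw hz (left_ne_zero_of_mul hij)
  have hactive : ∀ r, i = node r ∨ j = node r → z r = 1 := by
    rintro r (rfl | rfl)
    exacts [isActive_node.1 harc.2.1, isActive_node.1 harc.2.2.1]
  obtain ⟨hp, hq⟩ := lamNode_apply_ne_zero harc.1 (right_ne_zero_of_mul hij)
  exact ⟨hactive p hp, hactive q hq⟩

lemma sum_smul_lamNode_mul_facQ_apply (hA : Assumption1 n u v)
    (hz : ∀ ℓ, z ℓ = 0 ∨ z ℓ = 1) (hw : PathCon n z w) {p q : Fin n} (hp : z p = 1)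
    (hq : z q = 1) :
    ((∑ i, ∑ j, w i j • LamNode n u v i j) * facQ n u v) p q = if p = q then 1 else 0 := by
  set cle := if q ≤ p then u q / u p else 0
  set clt := if q < p then u q / u p else 0
  have hterm : ∀ i j, w i j * (LamNode n u v i j * facQ n u v) p q =
      w i j * ((if i = node p then cle else 0) - (if j = node p then clt else 0)) := by
    intro i j
    by_cases hw0 : w i j = 0
    · simp [hw0]
    have harc := PathCon.isArc_of_ne_zero hw hz hw0
    rw [lamNode_mul_facQ_apply hA harc.1 fun h => harc.2.2.2 _ h.1 h.2 (isActive_node.2 hq)]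
  calc ((∑ i, ∑ j, w i j • LamNode n u v i j) * facQ n u v) p q
      = ∑ i, ∑ j, w i j * (LamNode n u v i j * facQ n u v) p q := by
        simp only [Finset.sum_mul, Matrix.smul_mul, Matrix.sum_apply, Matrix.smul_apply,
          smul_eq_mul]
    _ = ∑ i, ∑ j, w i j * ((if i = node p then cle else 0) - (if j = node p then clt else 0)) :=
        Finset.sum_congr rfl fun i _ => Finset.sum_congr rfl fun j _ => hterm i j
    _ = (∑ j, w (node p) j) * cle - (∑ i, w i (node p)) * clt := by
        simp [mul_sub, Finset.sum_sub_distrib, Finset.sum_mul]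
    _ = if p = q then 1 else 0 := by
        rw [PathCon.outflow_node hw, PathCon.inflow_node hw, hp, one_mul, one_mul]
        have hup := Assumption1.u_ne_zero hA p
        rcases lt_trichotomy q p with hlt | rfl | hgt
        · simp [cle, clt, hlt, hlt.le, hlt.ne']
        · simp [cle, clt, hup]
        · simp [cle, clt, hgt.not_ge, hgt.not_gt, hgt.ne]

end FactorizablePath

theorem stmt_5_general (n : ℕ) (u v : Fin n → ℝ) (hA : Assumption1 n u v)
    (z : Fin n → ℝ) (hz : ∀ i, z i = 0 ∨ z i = 1) :
    (∃! w : Fin (n + 2) → Fin (n + 2) → ℝ, PathCon n z w) ∧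
      ∀ w : Fin (n + 2) → Fin (n + 2) → ℝ, PathCon n z w →
        (∑ i : Fin (n + 2), ∑ j : Fin (n + 2), w i j • LamNode n u v i j) =
          hatInv n (facQ n u v) (Finset.univ.filter fun ℓ => z ℓ = 1) := by
  refine ⟨⟨FactorizablePath.arcFlow z, FactorizablePath.pathCon_arcFlow hz,
    fun w hw => FactorizablePath.PathCon.eq_arcFlow hw hz⟩, fun w hw => ?_⟩
  refine (FactorizablePath.hatInv_eq_of_mul_eq (fun p q h => ?_) fun p hp q hq => ?_).symm
  · simpa using FactorizablePath.sum_smul_lamNode_apply_ne_zero hz hw h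
  · simp only [Finset.mem_filter, Finset.mem_univ, true_and] at hp hq
    exact FactorizablePath.sum_smul_lamNode_mul_facQ_apply hA hz hw hp hq

theorem stmt_5 (n : ℕ) (hn : 1 ≤ n) (u v : Fin n → ℝ) (hA : Assumption1 n u v)
    (z : Fin n → ℝ) (hz : ∀ i, z i = 0 ∨ z i = 1) :
    (∃! w : Fin (n + 2) → Fin (n + 2) → ℝ, PathCon n z w) ∧
      ∀ w : Fin (n + 2) → Fin (n + 2) → ℝ, PathCon n z w →
        (∑ i : Fin (n + 2), ∑ j : Fin (n + 2), w i j • LamNode n u v i j) =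
          hatInv n (facQ n u v) (Finset.univ.filter fun ℓ => z ℓ = 1) :=
  stmt_5_general n u v hA z hz
end

section
/- Let n ≥ 1 and let u, v : {1,…,n} → ℝ satisfy Assumption 1. Consider the polytope P of all triples (z, w, W) ∈ ℝ^n × ℝ^{(n+1)(n+2)/2} × ℝ^{n×n} such that w = (w_{ij})_{0 ≤ i < j ≤ n+1} satisfies the path constraints for z and W = Σ_{1 ≤ i < j ≤ n+1} Λ_{i→j} w_{ij}. Then every extreme point (z, w, W) of P satisfies w_{ij} ∈ {0,1} for all 0 ≤ i < j ≤ n+1 and z_ℓ ∈ {0,1} for all ℓ ∈ {1,…,n}. -/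
/-!
The coordinates `z` and `W` are linear functions of the arc values `w`, so it suffices to show that
the vertices of the polytope of unit `0 → n+1` flows on the acyclic graph `0 < 1 < ⋯ < n+1` are
integral. Starting at `0` and always leaving along an arc with positive flow, conservation keeps the
outflow positive and acyclicity forces progress, so this greedy path reaches `n+1`. If `χ` is its
indicator and `0 < θ < 1` lies below `w` on every path arc, then `w = θ χ + (1 - θ) q` for the unit
flow `q = (w - θ χ) / (1 - θ)`, and extremality forces `w = χ`.
-/

open Matrix BigOperators
open scoped Classical

section NetFlow

variable {ι : Type*} [Fintype ι]

def netFlow (w : ι → ι → ℝ) (ℓ : ι) : ℝ :=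
  (∑ i, w i ℓ) - ∑ j, w ℓ j

lemma netFlow_sub (w a : ι → ι → ℝ) (ℓ : ι) : netFlow (w - a) ℓ = netFlow w ℓ - netFlow a ℓ := by
  simp only [netFlow, Pi.sub_apply, Finset.sum_sub_distrib]
  ring

lemma netFlow_smul (c : ℝ) (w : ι → ι → ℝ) (ℓ : ι) : netFlow (c • w) ℓ = c * netFlow w ℓ := by
  simp only [netFlow, Pi.smul_apply, smul_eq_mul, ← Finset.mul_sum]
  ring

end NetFlow

def unitDemand (n : ℕ) (ℓ : Fin (n + 2)) : ℝ :=
  if (ℓ : ℕ) = 0 then -1 else if (ℓ : ℕ) = n + 1 then 1 else 0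

structure IsUnitFlow {n : ℕ} (w : Fin (n + 2) → Fin (n + 2) → ℝ) : Prop where
  eq_zero_of_not_lt : ∀ i j, ¬i < j → w i j = 0
  nonneg : ∀ i j, 0 ≤ w i j
  netFlow_eq : ∀ ℓ, netFlow w ℓ = unitDemand n ℓ

namespace IsUnitFlow

variable {n : ℕ} {w a : Fin (n + 2) → Fin (n + 2) → ℝ}

lemma residual (hw : IsUnitFlow w) (ha : IsUnitFlow a) {θ : ℝ} (hθ : θ < 1) (hle : θ • a ≤ w) :
    IsUnitFlow ((1 - θ)⁻¹ • (w - θ • a)) where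
  eq_zero_of_not_lt i j h := by
    simp [hw.eq_zero_of_not_lt i j h, ha.eq_zero_of_not_lt i j h]
  nonneg i j := smul_nonneg (inv_nonneg.2 (sub_nonneg.2 hθ.le)) (sub_nonneg.2 (hle i j))
  netFlow_eq ℓ := by
    rw [netFlow_smul, netFlow_sub, netFlow_smul, hw.netFlow_eq, ha.netFlow_eq]
    field_simp [(sub_pos.2 hθ).ne']

lemma lt_of_pos (hw : IsUnitFlow w) {i j : Fin (n + 2)} (h : 0 < w i j) : i < j := by
  by_contra hij
  exact h.ne' (hw.eq_zero_of_not_lt i j hij)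

end IsUnitFlow

section GreedyPath

variable {n : ℕ} {w : Fin (n + 2) → Fin (n + 2) → ℝ}

noncomputable def nextNode (w : Fin (n + 2) → Fin (n + 2) → ℝ) (c : Fin (n + 2)) : Fin (n + 2) :=
  if h : ∃ d, 0 < w c d then h.choose else c

def OnPath (w : Fin (n + 2) → Fin (n + 2) → ℝ) (c : Fin (n + 2)) : Prop :=
  ∃ t, (nextNode w)^[t] 0 = c

noncomputable def pathIndicator (w : Fin (n + 2) → Fin (n + 2) → ℝ) (i j : Fin (n + 2)) : ℝ :=
  if OnPath w i ∧ i ≠ Fin.last (n + 1) ∧ nextNode w i = j then 1 else 0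

lemma onPath_zero : OnPath w 0 := ⟨0, rfl⟩

lemma OnPath.nextNode {c : Fin (n + 2)} (hc : OnPath w c) : OnPath w (nextNode w c) :=
  let ⟨t, ht⟩ := hc
  ⟨t + 1, by rw [Function.iterate_succ_apply', ht]⟩

lemma pos_nextNode {c : Fin (n + 2)} (h : 0 < ∑ j, w c j) : 0 < w c (nextNode w c) := by
  have hex : ∃ d, 0 < w c d := by
    by_contra! hle
    exact h.not_ge (Finset.sum_nonpos fun d _ => hle d)
  rw [nextNode, dif_pos hex]
  exact hex.choose_spec

lemma sum_pathIndicator_out (ℓ : Fin (n + 2)) :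
    ∑ j, pathIndicator w ℓ j = if OnPath w ℓ ∧ ℓ ≠ Fin.last (n + 1) then 1 else 0 := by
  by_cases h : OnPath w ℓ ∧ ℓ ≠ Fin.last (n + 1)
  · simp [pathIndicator, h]
  · simp only [pathIndicator, ← and_assoc, h, false_and, if_false, Finset.sum_const_zero]

lemma pathIndicator_eq_zero_or_one (i j : Fin (n + 2)) :
    pathIndicator w i j = 0 ∨ pathIndicator w i j = 1 := by
  unfold pathIndicator
  split_ifs <;> simp

namespace IsUnitFlow

variable (hw : IsUnitFlow w)
include hw

lemma le_nextNode (c : Fin (n + 2)) : c ≤ nextNode w c := by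
  unfold nextNode
  split_ifs with h
  · exact (hw.lt_of_pos h.choose_spec).le
  · exact le_rfl

lemma nextNode_last : nextNode w (Fin.last (n + 1)) = Fin.last (n + 1) :=
  le_antisymm (Fin.le_last _) (hw.le_nextNode _)

lemma monotone_iterate_nextNode : Monotone fun t => (nextNode w)^[t] 0 :=
  monotone_nat_of_le_succ fun t => by
    simpa only [Function.iterate_succ_apply'] using hw.le_nextNode _

lemma eq_last_or_pos_outflow {c : Fin (n + 2)} (hc : OnPath w c) :
    c = Fin.last (n + 1) ∨ 0 < ∑ j, w c j := by
  obtain ⟨t, rfl⟩ := hc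
  induction t with
  | zero =>
    have hin : ∑ i, w i 0 = 0 :=
      Finset.sum_eq_zero fun i _ => hw.eq_zero_of_not_lt i 0 (Fin.not_lt_zero i)
    have h0 := hw.netFlow_eq 0
    simp only [netFlow, unitDemand, hin, Fin.val_zero, if_true] at h0
    right
    simp only [Function.iterate_zero, id_eq]
    linarith
  | succ t ih =>
    rw [Function.iterate_succ_apply']
    set c := (nextNode w)^[t] 0
    rcases ih with hc | hc
    · left; rw [hc, hw.nextNode_last]
    by_cases hl : nextNode w c = Fin.last (n + 1)
    · exact Or.inl hl
    right
    have hd := pos_nextNode hc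
    have hin : 0 < ∑ i, w i (nextNode w c) :=
      hd.trans_le (Finset.single_le_sum (f := fun i => w i (nextNode w c))
        (fun i _ => hw.nonneg i _) (Finset.mem_univ c))
    have hlt : c < nextNode w c := hw.lt_of_pos hd
    have hcons := hw.netFlow_eq (nextNode w c)
    have h0 : ((nextNode w c : Fin (n + 2)) : ℕ) ≠ 0 := by
      have : (c : ℕ) < nextNode w c := hlt
      omega
    have hl' : ((nextNode w c : Fin (n + 2)) : ℕ) ≠ n + 1 := fun h => hl (Fin.ext h)
    rw [netFlow, unitDemand, if_neg h0, if_neg hl'] at hcons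
    linarith

lemma pos_nextNode_of_onPath {c : Fin (n + 2)} (hc : OnPath w c) (hl : c ≠ Fin.last (n + 1)) :
    0 < w c (nextNode w c) :=
  _root_.pos_nextNode ((hw.eq_last_or_pos_outflow hc).resolve_left hl)

lemma lt_nextNode_of_onPath {c : Fin (n + 2)} (hc : OnPath w c) (hl : c ≠ Fin.last (n + 1)) :
    c < nextNode w c :=
  hw.lt_of_pos (hw.pos_nextNode_of_onPath hc hl)

lemma nextNode_le_of_lt {c c' : Fin (n + 2)} (hc : OnPath w c) (hc' : OnPath w c') (h : c < c') :
    nextNode w c ≤ c' := by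
  obtain ⟨s, rfl⟩ := hc
  obtain ⟨t, rfl⟩ := hc'
  have hst : s < t := by
    by_contra! hts
    exact h.not_ge (hw.monotone_iterate_nextNode hts)
  rw [← Function.iterate_succ_apply' (nextNode w)]
  exact hw.monotone_iterate_nextNode hst

lemma nextNode_injOn {c c' : Fin (n + 2)} (hc : OnPath w c) (hc' : OnPath w c')
    (hl : c ≠ Fin.last (n + 1)) (hl' : c' ≠ Fin.last (n + 1))
    (h : nextNode w c = nextNode w c') : c = c' := by
  by_contra hne
  rcases lt_or_gt_of_ne hne with hlt | hgt
  · exact ((hw.nextNode_le_of_lt hc hc' hlt).trans_lt (hw.lt_nextNode_of_onPath hc' hl')).ne h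
  · exact ((hw.nextNode_le_of_lt hc' hc hgt).trans_lt (hw.lt_nextNode_of_onPath hc hl)).ne' h

lemma exists_pred_of_onPath {ℓ : Fin (n + 2)} (hℓ : OnPath w ℓ) (h0 : ℓ ≠ 0) :
    ∃ c, OnPath w c ∧ c ≠ Fin.last (n + 1) ∧ nextNode w c = ℓ := by
  obtain ⟨t, rfl⟩ := hℓ
  induction t with
  | zero => exact absurd rfl h0
  | succ t ih =>
    rw [Function.iterate_succ_apply'] at h0 ⊢
    by_cases hl : (nextNode w)^[t] 0 = Fin.last (n + 1)
    · have hfix : nextNode w ((nextNode w)^[t] 0) = (nextNode w)^[t] 0 := by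
        rw [hl, hw.nextNode_last]
      rw [hfix] at h0 ⊢
      exact ih h0
    · exact ⟨_, ⟨t, rfl⟩, hl, rfl⟩

/-- The greedy path gains at least one node per step, so it reaches the sink after `n + 1` steps. -/
lemma onPath_last : OnPath w (Fin.last (n + 1)) := by
  have key : ∀ t, (nextNode w)^[t] 0 = Fin.last (n + 1) ∨ t ≤ ((nextNode w)^[t] 0 : ℕ) := by
    intro t
    induction t with
    | zero => exact Or.inr (Nat.zero_le _)
    | succ t ih =>
      rw [Function.iterate_succ_apply']
      by_cases hl : (nextNode w)^[t] 0 = Fin.last (n + 1)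
      · exact Or.inl (by rw [hl, hw.nextNode_last])
      · have hlt : ((nextNode w)^[t] 0 : ℕ) < nextNode w ((nextNode w)^[t] 0) :=
          hw.lt_nextNode_of_onPath ⟨t, rfl⟩ hl
        exact Or.inr (by omega)
  refine ⟨n + 1, (key (n + 1)).elim id fun h => Fin.ext ?_⟩
  have := Fin.is_le ((nextNode w)^[n + 1] 0)
  simp only [Fin.val_last]
  omega

lemma sum_pathIndicator_in (ℓ : Fin (n + 2)) :
    ∑ i, pathIndicator w i ℓ = if OnPath w ℓ ∧ ℓ ≠ 0 then 1 else 0 := by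
  split_ifs with hℓ
  · obtain ⟨c, hc, hl, rfl⟩ := hw.exists_pred_of_onPath hℓ.1 hℓ.2
    rw [Finset.sum_eq_single c]
    · simp [pathIndicator, hc, hl]
    · intro i _ hi
      simp only [pathIndicator, ite_eq_right_iff, one_ne_zero, imp_false, not_and]
      exact fun hi' hl' h => hi (hw.nextNode_injOn hi' hc hl' hl h)
    · simp
  · refine Finset.sum_eq_zero fun i _ => ?_
    simp only [pathIndicator, ite_eq_right_iff, one_ne_zero, imp_false, not_and]
    rintro hi hl rfl
    exact hℓ ⟨hi.nextNode, (hw.lt_nextNode_of_onPath hi hl).ne_bot⟩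

lemma isUnitFlow_pathIndicator : IsUnitFlow (pathIndicator w) where
  eq_zero_of_not_lt i j h := by
    simp only [pathIndicator, ite_eq_right_iff, one_ne_zero, imp_false, not_and]
    rintro hi hl rfl
    exact h (hw.lt_nextNode_of_onPath hi hl)
  nonneg i j := by unfold pathIndicator; positivity
  netFlow_eq ℓ := by
    have h0 : (0 : Fin (n + 2)) ≠ Fin.last (n + 1) := Fin.last_pos.ne
    rw [netFlow, hw.sum_pathIndicator_in, sum_pathIndicator_out, unitDemand]
    by_cases hℓ0 : ℓ = 0
    · subst hℓ0
      simp [onPath_zero, h0]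
    by_cases hℓl : ℓ = Fin.last (n + 1)
    · subst hℓl
      simp [hw.onPath_last, h0.symm]
    have hv0 : (ℓ : ℕ) ≠ 0 := fun h => hℓ0 (Fin.ext h)
    have hvl : (ℓ : ℕ) ≠ n + 1 := fun h => hℓl (Fin.ext h)
    simp [hℓ0, hℓl, hv0, hvl]

lemma pos_of_pathIndicator_ne_zero {i j : Fin (n + 2)}
    (h : pathIndicator w i j ≠ 0) : 0 < w i j := by
  unfold pathIndicator at h
  split_ifs at h with hij
  · obtain ⟨hi, hl, rfl⟩ := hij
    exact hw.pos_nextNode_of_onPath hi hl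
  · exact absurd rfl h

open Filter Topology in
lemma exists_smul_pathIndicator_le :
    ∃ θ : ℝ, 0 < θ ∧ θ < 1 ∧ θ • pathIndicator w ≤ w := by
  have hnear : ∀ i j, ∀ᶠ θ in 𝓝 (0 : ℝ), θ * pathIndicator w i j ≤ w i j := by
    intro i j
    by_cases h : pathIndicator w i j = 0
    · simp [h, hw.nonneg i j]
    · have hlim : Tendsto (fun θ : ℝ => θ * pathIndicator w i j) (𝓝 0) (𝓝 0) := by
        simpa using (tendsto_id (x := 𝓝 (0 : ℝ))).mul_const (pathIndicator w i j)
      exact hlim.eventually (Iic_mem_nhds (hw.pos_of_pathIndicator_ne_zero h))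
  have hall := (eventually_all.2 fun i => eventually_all.2 (hnear i)).and (gt_mem_nhds one_pos)
  obtain ⟨θ, ⟨hle, h1⟩, h0⟩ := ((hall.filter_mono nhdsWithin_le_nhds).and
    (self_mem_nhdsWithin (s := Set.Ioi 0))).exists
  exact ⟨θ, h0, h1, fun i j => hle i j⟩

end IsUnitFlow

end GreedyPath

lemma pathIndicator_eq_of_mem_extremePoints {n : ℕ} {w : Fin (n + 2) → Fin (n + 2) → ℝ}
    (hw : w ∈ Set.extremePoints ℝ {w | IsUnitFlow w}) :
    pathIndicator w = w := by
  obtain ⟨hw, hext⟩ := hw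
  have hχ := hw.isUnitFlow_pathIndicator
  obtain ⟨θ, hθ0, hθ1, hle⟩ := hw.exists_smul_pathIndicator_le
  refine hext hχ (hw.residual hχ hθ1 hle) ⟨θ, 1 - θ, hθ0, sub_pos.2 hθ1, by ring, ?_⟩
  rw [smul_smul, mul_inv_cancel₀ (sub_pos.2 hθ1).ne', one_smul, add_sub_cancel]

lemma mem_extremePoints_of_image {𝕜 E F : Type*} [Ring 𝕜] [PartialOrder 𝕜] [IsOrderedRing 𝕜]
    [AddCommGroup E] [Module 𝕜 E] [AddCommGroup F] [Module 𝕜 F] {f : E →ₗ[𝕜] F}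
    (hf : Function.Injective f) {s : Set E} {x : E} (hx : f x ∈ Set.extremePoints 𝕜 (f '' s)) :
    x ∈ Set.extremePoints 𝕜 s := by
  refine ⟨hf.mem_set_image.1 hx.1, fun x₁ h₁ x₂ h₂ hseg => hf <| hx.2 (Set.mem_image_of_mem f h₁)
    (Set.mem_image_of_mem f h₂) ?_⟩
  have := Set.mem_image_of_mem f.toAffineMap hseg
  rwa [image_openSegment] at this

def flowLift {M : Type*} [AddCommGroup M] [Module ℝ M] (n : ℕ)
    (Λ : Fin (n + 2) → Fin (n + 2) → M) :
    (Fin (n + 2) → Fin (n + 2) → ℝ) →ₗ[ℝ] (Fin n → ℝ) × (Fin (n + 2) → Fin (n + 2) → ℝ) × M where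
  toFun w := (fun ℓ => ∑ i, w i ⟨(ℓ : ℕ) + 1, by omega⟩, w, ∑ i, ∑ j, w i j • Λ i j)
  map_add' a b := by ext <;> simp [Finset.sum_add_distrib, add_smul]
  map_smul' c a := by ext <;> simp [Finset.mul_sum, Finset.smul_sum, smul_smul]

lemma flowLift_injective {M : Type*} [AddCommGroup M] [Module ℝ M] (n : ℕ)
    (Λ : Fin (n + 2) → Fin (n + 2) → M) : Function.Injective (flowLift n Λ) :=
  fun _ _ h => congrArg (fun q => q.2.1) h

lemma setOf_pathCon_eq_image_flowLift {M : Type*} [AddCommGroup M] [Module ℝ M] (n : ℕ)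
    (Λ : Fin (n + 2) → Fin (n + 2) → M) :
    {q : (Fin n → ℝ) × (Fin (n + 2) → Fin (n + 2) → ℝ) × M |
      PathCon n q.1 q.2.1 ∧ q.2.2 = ∑ i, ∑ j, q.2.1 i j • Λ i j} =
      flowLift n Λ '' {w | IsUnitFlow w} := by
  ext ⟨z, w, W⟩
  simp only [Set.mem_ofPred_eq, Set.mem_image, PathCon, flowLift, LinearMap.coe_mk, AddHom.coe_mk,
    Prod.mk.injEq]
  constructor
  · rintro ⟨⟨h0, hnn, hnet, hz⟩, rfl⟩
    exact ⟨w, ⟨h0, hnn, hnet⟩, (funext hz).symm, rfl, rfl⟩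
  · rintro ⟨w, ⟨h0, hnn, hnet⟩, rfl, rfl, rfl⟩
    exact ⟨⟨h0, hnn, hnet, fun _ => rfl⟩, rfl⟩

theorem stmt_6_general (n : ℕ) (u v : Fin n → ℝ) :
    ∀ p ∈ Set.extremePoints ℝ
        {q : (Fin n → ℝ) × (Fin (n + 2) → Fin (n + 2) → ℝ) × Matrix (Fin n) (Fin n) ℝ |
          PathCon n q.1 q.2.1 ∧
          q.2.2 = ∑ i : Fin (n + 2), ∑ j : Fin (n + 2), q.2.1 i j • LamNode n u v i j},
      (∀ i j : Fin (n + 2), p.2.1 i j = 0 ∨ p.2.1 i j = 1) ∧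
      ∀ ℓ : Fin n, p.1 ℓ = 0 ∨ p.1 ℓ = 1 := by
  intro p hp
  rw [setOf_pathCon_eq_image_flowLift] at hp
  obtain ⟨w, hw, rfl⟩ := extremePoints_subset hp
  have hχ := pathIndicator_eq_of_mem_extremePoints
    (mem_extremePoints_of_image (flowLift_injective n _) hp)
  refine ⟨fun i j => hχ ▸ pathIndicator_eq_zero_or_one i j, fun ℓ => ?_⟩
  change ∑ i, w i _ = 0 ∨ ∑ i, w i _ = 1
  rw [← hχ, IsUnitFlow.sum_pathIndicator_in hw]
  split_ifs <;> simp

theorem stmt_6 (n : ℕ) (hn : 1 ≤ n) (u v : Fin n → ℝ) (hA : Assumption1 n u v) :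
    ∀ p ∈ Set.extremePoints ℝ
        {q : (Fin n → ℝ) × (Fin (n + 2) → Fin (n + 2) → ℝ) × Matrix (Fin n) (Fin n) ℝ |
          PathCon n q.1 q.2.1 ∧
          q.2.2 = ∑ i : Fin (n + 2), ∑ j : Fin (n + 2), q.2.1 i j • LamNode n u v i j},
      (∀ i j : Fin (n + 2), p.2.1 i j = 0 ∨ p.2.1 i j = 1) ∧
      ∀ ℓ : Fin n, p.1 ℓ = 0 ∨ p.1 ℓ = 1 :=
  stmt_6_general n u v
end

section
/- Let n, d ≥ 1 and let U_i, V_i ∈ ℝ^{d×d} (1 ≤ i ≤ n) with each U_i V_iᵀ symmetric, and let Q ∈ ℝ^{dn×dn} be the associated block-factorizable matrix. Then Q is positive definite if and only if U_i V_iᵀ is positive definite for every i ∈ {1,…,n} (which forces each U_i to be invertible) and U_i V_iᵀ − U_i U_j⁻¹ V_j U_iᵀ is positive definite for all 1 ≤ i < j ≤ n. -/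
open Matrix BigOperators
open scoped Classical

/-- The block-factorizable matrix with `(i,j)`-th `d×d` block `U_i V_jᵀ` for `i ≤ j`
and `V_i U_jᵀ` for `i > j`. -/
noncomputable def blockQ (n d : ℕ) (U V : Fin n → Matrix (Fin d) (Fin d) ℝ) :
    Matrix (Fin n × Fin d) (Fin n × Fin d) ℝ :=
  Matrix.of fun p q =>
    if p.1 ≤ q.1 then (U p.1 * (V q.1)ᵀ) p.2 q.2 else (V p.1 * (U q.1)ᵀ) p.2 q.2

/-- Assumption 2. -/
def Assumption2 (n d : ℕ) (U V : Fin n → Matrix (Fin d) (Fin d) ℝ) : Prop :=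
  (∀ i : Fin n, (U i * (V i)ᵀ).PosDef) ∧
    ∀ i j : Fin n, i < j → (U i * (V i)ᵀ - U i * (U j)⁻¹ * V j * (U i)ᵀ).PosDef

/-- `E_i`, the `dn×d` block column matrix whose `i`-th block is the identity. -/
def Emat (n d : ℕ) (i : Fin n) : Matrix (Fin n × Fin d) (Fin d) ℝ :=
  Matrix.of fun p b => if p.1 = i ∧ p.2 = b then 1 else 0

/-- `Λ_{[i→j]}` for `1 ≤ i < j ≤ n`. -/
noncomputable def BLamMid (n d : ℕ) (U V : Fin n → Matrix (Fin d) (Fin d) ℝ) (i j : Fin n) :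
    Matrix (Fin n × Fin d) (Fin n × Fin d) ℝ :=
  (Emat n d i - Emat n d j * ((U j)ᵀ)⁻¹ * (U i)ᵀ) *
    (U i * (V i)ᵀ - U i * (U j)⁻¹ * V j * (U i)ᵀ)⁻¹ *
    (Emat n d i - Emat n d j * ((U j)ᵀ)⁻¹ * (U i)ᵀ)ᵀ

/-- `Λ_{[i→n+1]} = E_i (U_i V_iᵀ)⁻¹ E_iᵀ`. -/
noncomputable def BLamEnd (n d : ℕ) (U V : Fin n → Matrix (Fin d) (Fin d) ℝ) (i : Fin n) :
    Matrix (Fin n × Fin d) (Fin n × Fin d) ℝ :=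
  Emat n d i * (U i * (V i)ᵀ)⁻¹ * (Emat n d i)ᵀ

/-!
Put `S i = (U i)⁻¹ * V i`, which is symmetric. Then `Q = D M Dᵀ` with `D = diag (U i)` and `M`
the block matrix whose `(i, j)` block is `S (max i j)`. With `Δ k = S k - S (k + 1)` (and
`S n = 0`), `M = T diag (Δ k) Tᵀ` where `T` is block upper triangular with identity blocks.
As `D` and `T` are invertible, `Q` is positive definite iff every `Δ k` is, i.e. (telescoping)
iff every `S i` and every `S i - S j` with `i < j` is; congruence by `U i` turns these into the
stated conditions. Either side forces the `U i` to be invertible, since `U i * (V i)ᵀ` is a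
diagonal block of `Q`.
-/

open Finset
open scoped ComplexOrder

theorem Finset.sum_Ico_sub' {G : Type*} [AddCommGroup G] (f : ℕ → G) {m n : ℕ} (h : m ≤ n) :
    ∑ k ∈ Ico m n, (f k - f (k + 1)) = f m - f n := by
  rw [← neg_sub, ← sum_Ico_sub f h, ← sum_neg_distrib]
  simp only [neg_sub]

theorem Fin.sum_ite_le_sub' {G : Type*} [AddCommGroup G] (f : ℕ → G) {m n : ℕ} (h : m ≤ n) :
    ∑ k : Fin n, (if m ≤ (k : ℕ) then f k - f (k + 1) else 0) = f m - f n := by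
  rw [Fin.sum_univ_eq_sum_range (fun k => if m ≤ k then f k - f (k + 1) else 0), ← sum_filter,
    ← sum_Ico_sub' f h]
  congr 1
  ext k
  simp only [mem_filter, mem_range, mem_Ico]
  omega

namespace Matrix

theorem comp_conjTranspose {ι κ R : Type*} [Star R] (M : Matrix ι ι (Matrix κ κ R)) :
    comp ι ι κ κ R Mᴴ = (comp ι ι κ κ R M)ᴴ := rfl

def upperOnes (ι A : Type*) [LinearOrder ι] [Zero A] [One A] : Matrix ι ι A :=
  of fun i k => if i ≤ k then 1 else 0

theorem isUnit_upperOnes (ι A : Type*) [Fintype ι] [LinearOrder ι] [Ring A] :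
    IsUnit (upperOnes ι A) := by
  have hℤ : IsUnit (upperOnes ι ℤ) := by
    rw [isUnit_iff_isUnit_det, det_of_isUpperTriangular]
    · simp [upperOnes]
    · intro i j hji
      simpa [upperOnes] using hji
  convert hℤ.map (Int.castRingHom A).mapMatrix
  ext i k
  simp only [upperOnes, RingHom.mapMatrix_apply, map_apply, of_apply]
  split_ifs <;> simp

theorem upperOnes_mul_diagonal_mul_conjTranspose {A : Type*} [Ring A] [StarRing A] {n : ℕ}
    (f : ℕ → A) (hf : f n = 0) :
    upperOnes (Fin n) A * diagonal (fun k : Fin n => f k - f (k + 1)) * (upperOnes (Fin n) A)ᴴ =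
      of fun i j => f (max i j : Fin n) := by
  ext i j
  have htel := Fin.sum_ite_le_sub' f (max i j : Fin n).isLt.le
  rw [hf, sub_zero] at htel
  rw [of_apply, ← htel, mul_apply]
  refine sum_congr rfl fun k _ => ?_
  simp only [upperOnes, mul_diagonal, conjTranspose_apply, of_apply, Fin.val_fin_le, max_le_iff]
  split_ifs <;> simp_all

section PosDef

variable {ι κ 𝕜 : Type*} [RCLike 𝕜]

theorem posDef_sub_of_posDef_sub_succ {f : ℕ → Matrix κ κ 𝕜} {i j : ℕ} (hij : i < j)
    (h : ∀ k, i ≤ k → k < j → (f k - f (k + 1)).PosDef) : (f i - f j).PosDef := by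
  rw [← sum_Ico_sub' f hij.le]
  exact posDef_sum (nonempty_Ico.2 hij) fun k hk => h k (mem_Ico.1 hk).1 (mem_Ico.1 hk).2

variable [Fintype ι] [Fintype κ] [DecidableEq ι]

theorem posDef_comp_diagonal_iff {Δ : ι → Matrix κ κ 𝕜} :
    (comp ι ι κ κ 𝕜 (diagonal Δ)).PosDef ↔ ∀ i, (Δ i).PosDef := by
  constructor
  · intro h i
    convert h.submatrix (Prod.mk_right_injective i)
    ext a b
    simp
  · intro h
    refine .of_dotProduct_mulVec_pos ?_ fun x hx => ?_
    · rw [IsHermitian, ← comp_conjTranspose, diagonal_conjTranspose]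
      exact congrArg _ (congrArg _ (funext fun i => (h i).1))
    have hquad : star x ⬝ᵥ (comp ι ι κ κ 𝕜 (diagonal Δ) *ᵥ x) =
        ∑ i, star (fun a => x (i, a)) ⬝ᵥ (Δ i *ᵥ fun a => x (i, a)) := by
      simp [dotProduct, mulVec, Fintype.sum_prod_type, diagonal_apply, mul_sum, Matrix.ite_apply,
        ite_mul, sum_ite_irrel]
    obtain ⟨i, hi⟩ : ∃ i, (fun a => x (i, a)) ≠ 0 := by
      by_contra! h0
      exact hx (funext fun p => congrFun (h0 p.1) p.2)
    rw [hquad]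
    exact sum_pos' (fun j _ => (h j).posSemidef.dotProduct_mulVec_nonneg _)
      ⟨i, mem_univ _, (h i).dotProduct_mulVec_pos hi⟩

theorem posDef_comp_max_iff {n : ℕ} {S : Fin n → Matrix κ κ 𝕜} :
    (comp (Fin n) (Fin n) κ κ 𝕜 (of fun i j => S (max i j))).PosDef ↔
      (∀ i, (S i).PosDef) ∧ ∀ i j, i < j → (S i - S j).PosDef := by
  set f : ℕ → Matrix κ κ 𝕜 := Function.extend Fin.val S 0
  have hf : ∀ i : Fin n, f i = S i := Fin.val_injective.extend_apply S 0
  have hf_top : ∀ k, n ≤ k → f k = 0 := fun k hk =>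
    Function.extend_apply' _ _ _ fun ⟨i, hi⟩ => by omega
  have hfac : of (fun i j => S (max i j)) = upperOnes (Fin n) (Matrix κ κ 𝕜) *
      diagonal (fun k : Fin n => f k - f (k + 1)) * (upperOnes (Fin n) (Matrix κ κ 𝕜))ᴴ := by
    rw [upperOnes_mul_diagonal_mul_conjTranspose f (hf_top n le_rfl)]
    simp only [hf]
  have hT := (isUnit_comp_iff _ _ _).2 (isUnit_upperOnes (Fin n) (Matrix κ κ 𝕜))
  rw [hfac, ← compRingEquiv_apply, map_mul, map_mul, compRingEquiv_apply, compRingEquiv_apply,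
    compRingEquiv_apply, comp_conjTranspose, ← star_eq_conjTranspose,
    IsUnit.posDef_star_right_conjugate_iff hT,
    posDef_comp_diagonal_iff (Δ := fun k : Fin n => f k - f (k + 1))]
  constructor
  · intro h
    have hsub : ∀ i j : ℕ, i < j → j ≤ n → (f i - f j).PosDef := fun i j hij hj =>
      posDef_sub_of_posDef_sub_succ hij fun k _ hk => h ⟨k, by omega⟩
    refine ⟨fun i => ?_, fun i j hij => ?_⟩
    · simpa [hf, hf_top n le_rfl] using hsub i n i.isLt le_rfl
    · simpa [hf] using hsub i j hij j.isLt.le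
  · rintro ⟨hS, hS_sub⟩ k
    by_cases hk : (k : ℕ) + 1 < n
    · simpa [hf, ← hf ⟨k + 1, hk⟩] using
        hS_sub k ⟨k + 1, hk⟩ (Fin.lt_def.2 (Nat.lt_succ_self k))
    · rw [hf_top (k + 1) (by omega), sub_zero, hf]
      exact hS k

end PosDef

section Congruence

variable {κ R : Type*} [Fintype κ] [DecidableEq κ] [CommRing R] {U V : Matrix κ κ R}

theorem inv_mul_mul_transpose_of_isSymm (hU : IsUnit U) (hUV : (U * Vᵀ).IsSymm) :
    U⁻¹ * V * Uᵀ = Vᵀ := by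
  rw [IsSymm, transpose_mul, transpose_transpose] at hUV
  rw [mul_assoc, hUV, nonsing_inv_mul_cancel_left _ _ ((isUnit_iff_isUnit_det U).1 hU)]

variable [StarRing R] [TrivialStar R]

theorem mul_transpose_eq_mul_inv_mul_mul_star (hU : IsUnit U) (hUV : (U * Vᵀ).IsSymm) :
    U * Vᵀ = U * (U⁻¹ * V) * star U := by
  rw [star_eq_conjTranspose, conjTranspose_eq_transpose_of_trivial, mul_assoc U,
    inv_mul_mul_transpose_of_isSymm hU hUV]

theorem mul_transpose_sub_eq_mul_sub_mul_star (hU : IsUnit U) (hUV : (U * Vᵀ).IsSymm)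
    (W X : Matrix κ κ R) :
    U * Vᵀ - U * W⁻¹ * X * Uᵀ = U * (U⁻¹ * V - W⁻¹ * X) * star U := by
  rw [mul_sub, sub_mul, ← mul_transpose_eq_mul_inv_mul_mul_star hU hUV, star_eq_conjTranspose,
    conjTranspose_eq_transpose_of_trivial, mul_assoc U W⁻¹]

end Congruence

end Matrix

theorem blockQ_submatrix_self {n d : ℕ} (U V : Fin n → Matrix (Fin d) (Fin d) ℝ) (i : Fin n) :
    (blockQ n d U V).submatrix (Prod.mk i) (Prod.mk i) = U i * (V i)ᵀ := by
  ext a b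
  simp [blockQ]

theorem blockQ_eq_conj {n d : ℕ} {U V : Fin n → Matrix (Fin d) (Fin d) ℝ}
    (hU : ∀ i, IsUnit (U i)) (hUV : ∀ i, (U i * (V i)ᵀ).IsSymm) :
    blockQ n d U V = comp _ _ _ _ ℝ (diagonal U) *
      comp _ _ _ _ ℝ (of fun i j => (U (max i j))⁻¹ * V (max i j)) *
      star (comp _ _ _ _ ℝ (diagonal U)) := by
  rw [star_eq_conjTranspose, ← comp_conjTranspose, ← compRingEquiv_apply,
    ← compRingEquiv_apply, ← compRingEquiv_apply, ← map_mul, ← map_mul, compRingEquiv_apply,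
    diagonal_conjTranspose]
  ext ⟨i, a⟩ ⟨j, b⟩
  simp only [blockQ, comp_apply, diagonal_mul, mul_diagonal, of_apply, Pi.star_apply,
    star_eq_conjTranspose, conjTranspose_eq_transpose_of_trivial]
  rcases le_or_gt i j with h | h
  · rw [if_pos h, max_eq_right h, mul_assoc, inv_mul_mul_transpose_of_isSymm (hU j) (hUV j)]
  · rw [if_neg h.not_ge, max_eq_left h.le, ← mul_assoc (U i),
      mul_nonsing_inv _ ((isUnit_iff_isUnit_det _).1 (hU i)), one_mul]

theorem stmt_9_general (n d : ℕ)
    (U V : Fin n → Matrix (Fin d) (Fin d) ℝ)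
    (hsym : ∀ i : Fin n, (U i * (V i)ᵀ)ᵀ = U i * (V i)ᵀ) :
    (blockQ n d U V).PosDef ↔
      ((∀ i : Fin n, (U i * (V i)ᵀ).PosDef) ∧
        ∀ i j : Fin n, i < j →
          (U i * (V i)ᵀ - U i * (U j)⁻¹ * V j * (U i)ᵀ).PosDef) := by
  have hdiag : (blockQ n d U V).PosDef → ∀ i, (U i * (V i)ᵀ).PosDef := fun hQ i =>
    blockQ_submatrix_self U V i ▸ hQ.submatrix (Prod.mk_right_injective i)
  by_cases hU : ∀ i, IsUnit (U i)
  swap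
  · obtain ⟨i, hi⟩ := not_forall.1 hU
    have hi' : ¬(U i * (V i)ᵀ).PosDef := fun h => hi (isUnit_of_mul_isUnit_left h.isUnit)
    exact iff_of_false (fun hQ => hi' (hdiag hQ i)) (fun h => hi' (h.1 i))
  have hD : IsUnit (comp _ _ _ _ ℝ (diagonal U)) := (isUnit_comp_iff _ _ _).2
    ((Pi.isUnit_iff.2 hU).map (diagonalRingHom (Fin n) (Matrix (Fin d) (Fin d) ℝ)))
  rw [blockQ_eq_conj hU hsym, IsUnit.posDef_star_right_conjugate_iff hD,
    posDef_comp_max_iff (S := fun i => (U i)⁻¹ * V i)]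
  refine and_congr (forall_congr' fun i => ?_) (forall₃_congr fun i j _ => ?_)
  · rw [mul_transpose_eq_mul_inv_mul_mul_star (hU i) (hsym i),
      IsUnit.posDef_star_right_conjugate_iff (hU i)]
  · rw [mul_transpose_sub_eq_mul_sub_mul_star (hU i) (hsym i),
      IsUnit.posDef_star_right_conjugate_iff (hU i)]

theorem stmt_9 (n d : ℕ) (hn : 1 ≤ n) (hd : 1 ≤ d)
    (U V : Fin n → Matrix (Fin d) (Fin d) ℝ)
    (hsym : ∀ i : Fin n, (U i * (V i)ᵀ)ᵀ = U i * (V i)ᵀ) :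
    (blockQ n d U V).PosDef ↔
      ((∀ i : Fin n, (U i * (V i)ᵀ).PosDef) ∧
        ∀ i j : Fin n, i < j →
          (U i * (V i)ᵀ - U i * (U j)⁻¹ * V j * (U i)ᵀ).PosDef) :=
  stmt_9_general n d U V hsym
end

section
/- Let n, d ≥ 1 and let U_i, V_i ∈ ℝ^{d×d} (1 ≤ i ≤ n) satisfy Assumption 2. Then the block-factorizable matrix Q ∈ ℝ^{dn×dn} is invertible and Q⁻¹ = Σ_{i=1}^{n} Γ_i Δ_i Γ_iᵀ. In particular, Q⁻¹ is block tridiagonal. -/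
open Matrix BigOperators
open scoped Classical

/-- `Δ_i = (U_i V_iᵀ − U_i U_{i+1}⁻¹ V_{i+1} U_iᵀ)⁻¹` for `i ≤ n−1`,
and `Δ_n = (U_n V_nᵀ)⁻¹`. -/
noncomputable def BDelta (n d : ℕ) (U V : Fin n → Matrix (Fin d) (Fin d) ℝ) (i : Fin n) :
    Matrix (Fin d) (Fin d) ℝ :=
  if h : (i : ℕ) + 1 < n then
    (U i * (V i)ᵀ - U i * (U ⟨(i : ℕ) + 1, h⟩)⁻¹ * V ⟨(i : ℕ) + 1, h⟩ * (U i)ᵀ)⁻¹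
  else (U i * (V i)ᵀ)⁻¹

/-- `Γ_i = E_i − E_{i+1} Θ_{i+1}ᵀ` with `Θ_{i+1} = U_i U_{i+1}⁻¹` for `i ≤ n−1`,
and `Γ_n = E_n`. -/
noncomputable def BGamma (n d : ℕ) (U : Fin n → Matrix (Fin d) (Fin d) ℝ) (i : Fin n) :
    Matrix (Fin n × Fin d) (Fin d) ℝ :=
  if h : (i : ℕ) + 1 < n then
    Emat n d i - Emat n d ⟨(i : ℕ) + 1, h⟩ * (U i * (U ⟨(i : ℕ) + 1, h⟩)⁻¹)ᵀ
  else Emat n d i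

/-!
Let `L` be the unit lower block-bidiagonal matrix with block columns `Γ_i`, and
`W_i = V_i - U_i U_{i+1}⁻¹ V_{i+1}` (`W_n = V_n`), so that `Δ_i = (U_i W_iᵀ)⁻¹` and
`∑ Γ_i Δ_i Γ_iᵀ = L diag(Δ) Lᵀ`. Since `U_j V_jᵀ` is symmetric, the blocks of `Q` on and below
the diagonal of column `j` are `V_k U_jᵀ`; hence the block column `Q Γ_i` vanishes below row `i`,
and its `k`-th block for `k ≤ i` is `U_k W_iᵀ`. So `Q L diag(Δ)` is block upper triangular with
blocks `U_k U_i⁻¹`, and its product with `Lᵀ`, whose only off-diagonal blocks are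
`-U_i U_{i+1}⁻¹`, telescopes to the identity. Block tridiagonality is inherited from the
bidiagonality of `L`.
-/

namespace BlockFactorizable

variable {R : Type*} [CommRing R]

theorem sum_ite_val_eq {M : Type*} [AddCommMonoid M] {n : ℕ} (f : Fin n → M) (m : ℕ) :
    ∑ j : Fin n, (if (j : ℕ) = m then f j else 0) = if h : m < n then f ⟨m, h⟩ else 0 := by
  split_ifs with h
  · rw [Finset.sum_eq_single ⟨m, h⟩ (fun j _ hj => if_neg fun hjm => hj (Fin.ext hjm))
      (by simp)]
    simp
  · exact Finset.sum_eq_zero fun j _ => if_neg fun (hjm : (j : ℕ) = m) => h (hjm ▸ j.isLt)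

section

variable {ι m : Type*} [Fintype m]

def blockCol (c : ι → Matrix m m R) : Matrix (ι × m) m R :=
  of fun p b => c p.1 p.2 b

theorem blockCol_mul_mul_transpose (c : ι → Matrix m m R) (A : Matrix m m R) :
    blockCol c * A * (blockCol c)ᵀ = comp ι ι m m R (of fun k l => c k * A * (c l)ᵀ) := by
  ext ⟨k, a⟩ ⟨l, b⟩
  simp [blockCol, mul_apply]

theorem mul_diagonal_mul_transpose_map_transpose_apply [Fintype ι] [DecidableEq ι]
    (G : Matrix ι ι (Matrix m m R)) (D : ι → Matrix m m R) (k l : ι) :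
    (G * diagonal D * Gᵀ.map (·ᵀ)) k l = ∑ i, G k i * D i * (G l i)ᵀ := by
  simp only [mul_apply (M := G * diagonal D), mul_diagonal, map_apply, transpose_apply]

theorem inv_mul_eq_transpose_mul_inv_transpose {A B : Matrix m m R} [DecidableEq m]
    (hA : IsUnit A.det) (h : B * Aᵀ = A * Bᵀ) : A⁻¹ * B = Bᵀ * (Aᵀ)⁻¹ :=
  calc A⁻¹ * B = A⁻¹ * (B * Aᵀ) * (Aᵀ)⁻¹ := by
        rw [← mul_assoc, mul_nonsing_inv_cancel_right _ _ (by simpa using hA)]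
    _ = Bᵀ * (Aᵀ)⁻¹ := by rw [h, nonsing_inv_mul_cancel_left _ _ hA]

end

variable {n d : ℕ} (U V : Fin n → Matrix (Fin d) (Fin d) R)

def qBlocks : Matrix (Fin n) (Fin n) (Matrix (Fin d) (Fin d) R) :=
  of fun k j => if k ≤ j then U k * (V j)ᵀ else V k * (U j)ᵀ

/-- `1 - subdiagBlocks U` is the unit lower block-bidiagonal matrix whose `i`-th block column is
`Γ_i`; its `(i+1, i)` block is `-Θ_{i+1}ᵀ`. -/
noncomputable def subdiagBlocks : Matrix (Fin n) (Fin n) (Matrix (Fin d) (Fin d) R) :=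
  of fun k i => if (k : ℕ) = i + 1 then (U i * (U k)⁻¹)ᵀ else 0

noncomputable def upperBlocks : Matrix (Fin n) (Fin n) (Matrix (Fin d) (Fin d) R) :=
  of fun k i => if k ≤ i then U k * (U i)⁻¹ else 0

noncomputable def ldlBlocks (D : Fin n → Matrix (Fin d) (Fin d) R) :
    Matrix (Fin n) (Fin n) (Matrix (Fin d) (Fin d) R) :=
  (1 - subdiagBlocks U) * diagonal D * (1 - subdiagBlocks U)ᵀ.map (·ᵀ)

noncomputable def wFactor (i : Fin n) : Matrix (Fin d) (Fin d) R :=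
  if h : (i : ℕ) + 1 < n then V i - U i * (U ⟨i + 1, h⟩)⁻¹ * V ⟨i + 1, h⟩ else V i

variable {U V}

theorem qBlocks_of_le (hsym : ∀ i, V i * (U i)ᵀ = U i * (V i)ᵀ) {j k : Fin n}
    (hjk : j ≤ k) : qBlocks U V k j = V k * (U j)ᵀ := by
  rcases hjk.lt_or_eq with hjk | rfl
  · simp [qBlocks, hjk.not_ge]
  · simp [qBlocks, hsym]

theorem qBlocks_mul_subdiagBlocks_apply (k i : Fin n) :
    (qBlocks U V * subdiagBlocks U) k i =
      if h : (i : ℕ) + 1 < n then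
        qBlocks U V k ⟨i + 1, h⟩ * (U i * (U ⟨i + 1, h⟩)⁻¹)ᵀ else 0 := by
  simp only [mul_apply, subdiagBlocks, of_apply, mul_ite, mul_zero]
  exact sum_ite_val_eq (fun j => qBlocks U V k j * (U i * (U j)⁻¹)ᵀ) _

theorem mul_wFactor_transpose (hsym : ∀ i, V i * (U i)ᵀ = U i * (V i)ᵀ)
    (hU : ∀ i, IsUnit (U i).det) (i : Fin n) (h : (i : ℕ) + 1 < n) :
    U i * (wFactor U V i)ᵀ =
      U i * (V i)ᵀ - U i * (U ⟨i + 1, h⟩)⁻¹ * V ⟨i + 1, h⟩ * (U i)ᵀ := by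
  rw [wFactor, dif_pos h, transpose_sub, transpose_mul, transpose_mul, transpose_nonsing_inv,
    ← mul_assoc (V _)ᵀ, ← inv_mul_eq_transpose_mul_inv_transpose (hU _) (hsym _), mul_sub]
  simp only [mul_assoc]

theorem qBlocks_mul_one_sub_subdiagBlocks_apply (hsym : ∀ i, V i * (U i)ᵀ = U i * (V i)ᵀ)
    (hU : ∀ i, IsUnit (U i).det) (k i : Fin n) :
    (qBlocks U V * (1 - subdiagBlocks U)) k i =
      if k ≤ i then U k * (wFactor U V i)ᵀ else 0 := by
  rw [mul_sub, mul_one, Matrix.sub_apply, qBlocks_mul_subdiagBlocks_apply, wFactor]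
  split_ifs with hi hki hki
  · have hki' : k ≤ ⟨i + 1, hi⟩ := Fin.le_def.2 (by simp only; omega)
    simp [qBlocks, hki, hki', transpose_nonsing_inv, mul_sub, mul_assoc]
  · set i' : Fin n := ⟨i + 1, hi⟩
    have hik' : i' ≤ k := Fin.le_def.2 (by simp only [i']; omega)
    have hU' : IsUnit (U i')ᵀ.det := by simpa using hU i'
    rw [qBlocks_of_le hsym (not_le.1 hki).le, qBlocks_of_le hsym hik', transpose_mul,
      transpose_nonsing_inv, ← mul_assoc, mul_assoc (V k), mul_nonsing_inv _ hU', mul_one,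
      sub_self]
  · simp [qBlocks, hki]
  · exact absurd (Fin.le_def.2 (by omega)) hki

theorem qBlocks_mul_one_sub_subdiagBlocks_mul_diagonal
    (hsym : ∀ i, V i * (U i)ᵀ = U i * (V i)ᵀ) (hU : ∀ i, IsUnit (U i).det)
    (hW : ∀ i, IsUnit (wFactor U V i).det) :
    qBlocks U V * (1 - subdiagBlocks U) * diagonal (fun i => (U i * (wFactor U V i)ᵀ)⁻¹) =
      upperBlocks U := by
  ext1 k i
  rw [mul_diagonal, qBlocks_mul_one_sub_subdiagBlocks_apply hsym hU, upperBlocks, of_apply]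
  split_ifs
  · rw [Matrix.mul_inv_rev, mul_assoc, ← mul_assoc (wFactor U V i)ᵀ,
      mul_nonsing_inv _ (by simpa using hW i), one_mul]
  · rw [zero_mul]

theorem upperBlocks_mul_subdiagBlocks_transpose_apply (hU : ∀ i, IsUnit (U i).det)
    (k l : Fin n) :
    (upperBlocks U * (subdiagBlocks U)ᵀ.map (·ᵀ)) k l =
      if k < l then U k * (U l)⁻¹ else 0 := by
  simp only [mul_apply, map_apply, transpose_apply, subdiagBlocks, upperBlocks, of_apply,
    apply_ite transpose, transpose_transpose, transpose_zero, mul_ite, mul_zero, ite_mul,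
    zero_mul]
  obtain ⟨_ | m, hl⟩ := l
  · simp [Fin.lt_def]
  · have hkm : k ≤ ⟨m, by omega⟩ ↔ k < ⟨m + 1, hl⟩ := by
      simp [Fin.le_def, Fin.lt_def]
    simp only [Nat.add_right_cancel_iff, @eq_comm ℕ m]
    rw [sum_ite_val_eq (fun i : Fin n => if k ≤ i then _ else 0), dif_pos (by omega),
      mul_assoc, nonsing_inv_mul_cancel_left _ _ (hU _)]
    exact if_congr hkm rfl rfl

theorem upperBlocks_mul_one_sub_subdiagBlocks_transpose (hU : ∀ i, IsUnit (U i).det) :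
    upperBlocks U * (1 - subdiagBlocks U)ᵀ.map (·ᵀ) = 1 := by
  rw [transpose_sub, transpose_one, Matrix.map_sub _ (fun _ _ => transpose_sub _ _),
    Matrix.map_one _ transpose_zero transpose_one, mul_sub, mul_one]
  ext1 k l
  rw [Matrix.sub_apply, upperBlocks_mul_subdiagBlocks_transpose_apply hU, upperBlocks, of_apply,
    one_apply]
  rcases lt_trichotomy k l with hkl | rfl | hkl
  · simp [hkl.le, hkl, hkl.ne]
  · simp [mul_nonsing_inv _ (hU k)]
  · simp [hkl.not_ge, hkl.not_gt, hkl.ne']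

theorem qBlocks_mul_ldlBlocks_eq_one (hsym : ∀ i, V i * (U i)ᵀ = U i * (V i)ᵀ)
    (hU : ∀ i, IsUnit (U i).det) (hW : ∀ i, IsUnit (wFactor U V i).det) :
    qBlocks U V * ldlBlocks U (fun i => (U i * (wFactor U V i)ᵀ)⁻¹) = 1 := by
  rw [ldlBlocks, ← mul_assoc, ← mul_assoc,
    qBlocks_mul_one_sub_subdiagBlocks_mul_diagonal hsym hU hW,
    upperBlocks_mul_one_sub_subdiagBlocks_transpose hU]

theorem one_sub_subdiagBlocks_apply_eq_zero {k i : Fin n} (h₁ : (k : ℕ) ≠ i)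
    (h₂ : (k : ℕ) ≠ i + 1) : (1 - subdiagBlocks U) k i = 0 := by
  simp [subdiagBlocks, one_apply, h₂, Fin.ext_iff, h₁]

theorem ldlBlocks_apply_eq_zero
    (D : Fin n → Matrix (Fin d) (Fin d) R) {k l : Fin n}
    (hkl : (k : ℕ) + 2 ≤ l ∨ (l : ℕ) + 2 ≤ k) :
    ldlBlocks U D k l = 0 := by
  rw [ldlBlocks, mul_diagonal_mul_transpose_map_transpose_apply]
  refine Finset.sum_eq_zero fun i _ => ?_
  by_cases hk : (k : ℕ) = i ∨ (k : ℕ) = i + 1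
  · rw [one_sub_subdiagBlocks_apply_eq_zero (k := l) (by omega) (by omega), transpose_zero,
      mul_zero]
  · rw [one_sub_subdiagBlocks_apply_eq_zero (not_or.1 hk).1 (not_or.1 hk).2, zero_mul, zero_mul]

section Real

variable {n d : ℕ} {U V : Fin n → Matrix (Fin d) (Fin d) ℝ}

theorem blockQ_eq_comp : blockQ n d U V = comp _ _ _ _ ℝ (qBlocks U V) := by
  ext ⟨k, a⟩ ⟨j, b⟩
  by_cases h : k ≤ j <;> simp [blockQ, qBlocks, h]

theorem BGamma_eq_blockCol (i : Fin n) :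
    BGamma n d U i = blockCol fun k => (1 - subdiagBlocks U) k i := by
  ext ⟨k, a⟩ b
  unfold BGamma
  split_ifs with h
  · obtain rfl | hki := eq_or_ne k i
    · simp [Emat, blockCol, subdiagBlocks, one_apply, mul_apply, Fin.ext_iff]
    · by_cases hk : (k : ℕ) = i + 1
      · obtain rfl : k = ⟨i + 1, h⟩ := Fin.ext hk
        simp [Emat, blockCol, subdiagBlocks, hki, mul_apply, mul_comm]
      · have hk' : k ≠ ⟨i + 1, h⟩ := fun e => hk (e ▸ rfl)
        simp [Emat, blockCol, subdiagBlocks, hki, hk, hk', mul_apply]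
  · have hk : (k : ℕ) ≠ i + 1 := by omega
    obtain rfl | hki := eq_or_ne k i <;>
      simp [Emat, blockCol, subdiagBlocks, one_apply, *]

theorem sum_BGamma_mul_mul_transpose (D : Fin n → Matrix (Fin d) (Fin d) ℝ) :
    ∑ i, BGamma n d U i * D i * (BGamma n d U i)ᵀ = comp _ _ _ _ ℝ (ldlBlocks U D) := by
  simp only [BGamma_eq_blockCol, blockCol_mul_mul_transpose, ← compAddEquiv_apply, ← map_sum]
  congr 1
  ext1 k l
  rw [ldlBlocks, mul_diagonal_mul_transpose_map_transpose_apply, Matrix.sum_apply]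
  rfl

end Real

end BlockFactorizable

open BlockFactorizable

namespace Assumption2

variable {n d : ℕ} {U V : Fin n → Matrix (Fin d) (Fin d) ℝ}

theorem mul_transpose_comm (hA : Assumption2 n d U V) (i : Fin n) :
    V i * (U i)ᵀ = U i * (V i)ᵀ := by
  have h := (hA.1 i).isHermitian
  rwa [IsHermitian, conjTranspose_eq_transpose_of_trivial, transpose_mul,
    transpose_transpose] at h

theorem isUnit_det (hA : Assumption2 n d U V) (i : Fin n) : IsUnit (U i).det := by
  have h := (hA.1 i).det_pos.ne'
  rw [det_mul] at h
  exact isUnit_iff_ne_zero.2 (left_ne_zero_of_mul h)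

theorem posDef_mul_wFactor_transpose (hA : Assumption2 n d U V) (i : Fin n) :
    (U i * (wFactor U V i)ᵀ).PosDef := by
  by_cases h : (i : ℕ) + 1 < n
  · rw [mul_wFactor_transpose hA.mul_transpose_comm hA.isUnit_det i h]
    exact hA.2 i _ (Fin.lt_def.2 (Nat.lt_succ_self _))
  · rw [wFactor, dif_neg h]
    exact hA.1 i

theorem isUnit_det_wFactor (hA : Assumption2 n d U V) (i : Fin n) :
    IsUnit (wFactor U V i).det := by
  have h := (hA.posDef_mul_wFactor_transpose i).det_pos.ne'
  rw [det_mul, det_transpose] at h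
  exact isUnit_iff_ne_zero.2 (right_ne_zero_of_mul h)

theorem BDelta_eq (hA : Assumption2 n d U V) (i : Fin n) :
    BDelta n d U V i = (U i * (wFactor U V i)ᵀ)⁻¹ := by
  unfold BDelta
  split_ifs with h
  · rw [mul_wFactor_transpose hA.mul_transpose_comm hA.isUnit_det i h]
  · rw [wFactor, dif_neg h]

end Assumption2

theorem stmt_10_general (n d : ℕ)
    (U V : Fin n → Matrix (Fin d) (Fin d) ℝ) (hA : Assumption2 n d U V) :
    IsUnit (blockQ n d U V) ∧
      (blockQ n d U V)⁻¹ =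
        ∑ i : Fin n, BGamma n d U i * BDelta n d U V i * (BGamma n d U i)ᵀ ∧
      ∀ p q : Fin n × Fin d,
        ((p.1 : ℕ) + 2 ≤ (q.1 : ℕ) ∨ (q.1 : ℕ) + 2 ≤ (p.1 : ℕ)) →
          (blockQ n d U V)⁻¹ p q = 0 := by
  set S := ∑ i : Fin n, BGamma n d U i * BDelta n d U V i * (BGamma n d U i)ᵀ
  have hS : S = comp _ _ _ _ ℝ (ldlBlocks U (BDelta n d U V)) := sum_BGamma_mul_mul_transpose _
  have hQS : blockQ n d U V * S = 1 := by
    rw [hS, blockQ_eq_comp, ← compRingEquiv_apply, ← compRingEquiv_apply, ← map_mul,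
      funext hA.BDelta_eq, qBlocks_mul_ldlBlocks_eq_one hA.mul_transpose_comm hA.isUnit_det
        hA.isUnit_det_wFactor, map_one]
  have hinv := inv_eq_right_inv hQS
  refine ⟨(isUnit_iff_isUnit_det _).2 (isUnit_det_of_right_inverse hQS), hinv,
    fun p q hpq => ?_⟩
  rw [hinv, hS]
  exact congrFun₂ (ldlBlocks_apply_eq_zero _ hpq) p.2 q.2

theorem stmt_10 (n d : ℕ) (hn : 1 ≤ n) (hd : 1 ≤ d)
    (U V : Fin n → Matrix (Fin d) (Fin d) ℝ) (hA : Assumption2 n d U V) :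
    IsUnit (blockQ n d U V) ∧
      (blockQ n d U V)⁻¹ =
        ∑ i : Fin n, BGamma n d U i * BDelta n d U V i * (BGamma n d U i)ᵀ ∧
      ∀ p q : Fin n × Fin d,
        ((p.1 : ℕ) + 2 ≤ (q.1 : ℕ) ∨ (q.1 : ℕ) + 2 ≤ (p.1 : ℕ)) →
          (blockQ n d U V)⁻¹ p q = 0 :=
  stmt_10_general n d U V hA
end
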